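/- arXiv:2605.17545 — 8 statements merged into one kernel-verified Lean document; each statement's English description precedes it below -/
import Mathlib

section
/- Let p be a prime and m, n positive integers with d = gcd(m,n). Then gcd(p^m + 1, p^n - 1) equals 1 if n/d is odd and p is even; equals 2 if n/d is odd and p is odd; and equals p^d + 1 if n/d is even. -/
/-!
Put `q = p ^ d`, `m = a d`, `n = b d` with `a, b` coprime. Since `p ^ m + 1` divides `p ^ (2m) - 1`
and `gcd (p ^ r - 1) (p ^ s - 1) = p ^ gcd r s - 1`, the gcd in question equals
`gcd (p ^ m + 1) (p ^ gcd (2m) n - 1)`. If `b` is odd then `gcd (2m) n = d` and `p ^ m + 1 ≡ 2` modulo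
`q - 1`, so the gcd is `gcd 2 (q - 1)`. If `b` is even then `a` is odd, `gcd (2m) n = 2d` and
`p ^ m + 1 = q ^ a + 1 ≡ q + 1` modulo `q ^ 2 - 1`, a multiple of `q + 1`.
-/

namespace Nat

theorem pow_add_one_dvd_pow_two_mul_sub_one (x m : ℕ) : x ^ m + 1 ∣ x ^ (2 * m) - 1 := by
  rw [mul_comm, pow_mul, ← one_pow 2, Nat.sq_sub_sq, one_pow]
  exact dvd_mul_right _ _

theorem gcd_pow_add_one_pow_sub_one (x m n : ℕ) :
    gcd (x ^ m + 1) (x ^ n - 1) = gcd (x ^ m + 1) (x ^ gcd (2 * m) n - 1) := by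
  apply Nat.dvd_antisymm
  · refine Nat.dvd_gcd (gcd_dvd_left _ _) ?_
    rw [← pow_sub_one_gcd_pow_sub_one]
    exact gcd_dvd_gcd_of_dvd_left _ (pow_add_one_dvd_pow_two_mul_sub_one x m)
  · exact gcd_dvd_gcd_of_dvd_right _ (pow_sub_one_dvd_pow_sub_one x (gcd_dvd_right _ _))

theorem gcd_pow_add_one_sub_one {y : ℕ} (hy : 0 < y) (a : ℕ) :
    gcd (y ^ a + 1) (y - 1) = gcd 2 (y - 1) := by
  have hy1 : y ≡ 1 [MOD y - 1] := modEq_sub hy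
  simpa using (hy1.pow a).add_right 1 |>.gcd_eq

theorem gcd_pow_add_one_sq_sub_one {y a : ℕ} (hy : 0 < y) (ha : Odd a) :
    gcd (y ^ a + 1) (y ^ 2 - 1) = y + 1 := by
  obtain ⟨k, rfl⟩ := ha
  have hy2 : y ^ 2 ≡ 1 [MOD y ^ 2 - 1] := modEq_sub (one_le_pow _ _ hy)
  have hya : y ^ (2 * k + 1) ≡ y [MOD y ^ 2 - 1] := by
    simpa [pow_succ, pow_mul] using (hy2.pow k).mul_right y
  rw [(hya.add_right 1).gcd_eq, Nat.gcd_eq_left]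
  simpa using pow_add_one_dvd_pow_two_mul_sub_one y 1

namespace Coprime

variable {a b : ℕ}

theorem gcd_two_mul_left_of_odd (hab : a.Coprime b) (hb : Odd b) : gcd (2 * a) b = 1 :=
  Coprime.mul_left (coprime_two_left.mpr hb) hab

theorem odd_of_even_right (hab : a.Coprime b) (hb : Even b) : Odd a := by
  by_contra ha
  have := Nat.dvd_gcd (not_odd_iff_even.mp ha).two_dvd hb.two_dvd
  rw [hab.gcd_eq_one] at this
  omega

theorem gcd_two_mul_left_of_even (hab : a.Coprime b) (hb : Even b) : gcd (2 * a) b = 2 := by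
  obtain ⟨c, rfl⟩ := hb
  rw [← two_mul] at hab ⊢
  rw [gcd_mul_left, hab.coprime_mul_left_right.gcd_eq_one]

end Coprime

end Nat

theorem stmt1_general (p m n d : ℕ) (hp : p.Prime) (hm : 0 < m)
    (hd : d = Nat.gcd m n) :
    (Odd (n / d) → p = 2 → Nat.gcd (p ^ m + 1) (p ^ n - 1) = 1) ∧
    (Odd (n / d) → p ≠ 2 → Nat.gcd (p ^ m + 1) (p ^ n - 1) = 2) ∧
    (Even (n / d) → Nat.gcd (p ^ m + 1) (p ^ n - 1) = p ^ d + 1) := by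
  have hd0 : 0 < d := hd ▸ Nat.gcd_pos_of_pos_left n hm
  have hq : 0 < p ^ d := pow_pos hp.pos d
  obtain ⟨a, b, hab, rfl, rfl⟩ : ∃ a b, a.Coprime b ∧ m = a * d ∧ n = b * d := by
    obtain ⟨a, b, hab, hma, hnb⟩ := Nat.exists_coprime m n
    exact ⟨a, b, hab, hd ▸ hma, hd ▸ hnb⟩
  rw [Nat.mul_div_cancel _ hd0, Nat.gcd_pow_add_one_pow_sub_one, ← mul_assoc, Nat.gcd_mul_right,
    pow_mul']
  refine ⟨fun hb hp2 => ?_, fun hb hp2 => ?_, fun hb => ?_⟩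
  · rw [hab.gcd_two_mul_left_of_odd hb, one_mul, Nat.gcd_pow_add_one_sub_one hq, hp2]
    exact Nat.coprime_two_left.mpr
      (Nat.Even.sub_odd Nat.one_le_two_pow (Nat.even_pow.mpr ⟨even_two, hd0.ne'⟩) odd_one)
  · rw [hab.gcd_two_mul_left_of_odd hb, one_mul, Nat.gcd_pow_add_one_sub_one hq]
    exact Nat.gcd_eq_left (Nat.Odd.sub_odd ((hp.odd_of_ne_two hp2).pow) odd_one).two_dvd
  · rw [hab.gcd_two_mul_left_of_even hb, mul_comm, pow_mul,
      Nat.gcd_pow_add_one_sq_sub_one hq (hab.odd_of_even_right hb)]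

theorem stmt1 (p m n d : ℕ) (hp : p.Prime) (hm : 0 < m) (hn : 0 < n)
    (hd : d = Nat.gcd m n) :
    (Odd (n / d) → p = 2 → Nat.gcd (p ^ m + 1) (p ^ n - 1) = 1) ∧
    (Odd (n / d) → p ≠ 2 → Nat.gcd (p ^ m + 1) (p ^ n - 1) = 2) ∧
    (Even (n / d) → Nat.gcd (p ^ m + 1) (p ^ n - 1) = p ^ d + 1) :=
  stmt1_general p m n d hp hm hd
end

section
/- Let q = p^m and let F : (F_q)^ℓ → (F_q)^ℓ be a map satisfying F(λx) = λ^(σ+1) F(x) for all λ ∈ F_q and x ∈ (F_q)^ℓ, where σ = p^k is a power of p, and suppose F(x) = 0 if and only if x = 0. If the induced map on the projective space P^(ℓ-1)(F_q) is bijective, then F is gcd(σ+1, q-1)-to-1 on (F_q)^ℓ \ {0}, i.e., every nonzero value in the image of F has exactly gcd(σ+1, q-1) preimages. -/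
/-!
The fibre of `Fn` through `x ≠ 0` is the orbit `{ζ • x | ζ ^ (σ + 1) = 1}`: any `y` with
`Fn y = Fn x` is a multiple `c • x` by injectivity on projective space, and homogeneity then
forces `c ^ (σ + 1) = 1`. So the fibre is in bijection with the `(σ + 1)`-th roots of unity of
`F_q`, a subgroup of the cyclic group `F_qˣ` of order `q - 1`, which has `gcd (σ + 1, q - 1)`
elements.
-/

theorem FiniteField.card_rootsOfUnity {K : Type*} [Field K] [Finite K] (n : ℕ) :
    Nat.card (rootsOfUnity n K) = n.gcd (Nat.card K - 1) := by
  rw [rootsOfUnity_eq_ker, IsCyclic.card_powMonoidHom_ker, Nat.card_units, Nat.gcd_comm]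

section HomogeneousMap

variable {K V W : Type*} [Field K] [AddCommGroup V] [Module K V] [AddCommGroup W] [Module K W]
  {f : V → W} {n : ℕ}

noncomputable def rootsOfUnityEquivFiber (hhom : ∀ (c : K) (x : V), f (c • x) = c ^ n • f x)
    (hzero : ∀ x, f x = 0 ↔ x = 0)
    (hinj : ∀ x y : V, x ≠ 0 → y ≠ 0 → (∃ c : K, c ≠ 0 ∧ f x = c • f y) →
      ∃ c : K, c ≠ 0 ∧ x = c • y)
    {x : V} (hx : x ≠ 0) : rootsOfUnity n K ≃ {y : V // f y = f x} :=
  Equiv.ofBijective (fun ζ => ⟨((ζ : Kˣ) : K) • x, by rw [hhom, ← Units.val_pow_eq_pow_val,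
      (mem_rootsOfUnity n _).mp ζ.2, Units.val_one, one_smul]⟩) <| by
    constructor
    · intro ζ ξ h
      exact Subtype.ext <| Units.ext <| smul_left_injective K hx (congrArg Subtype.val h)
    · rintro ⟨y, hy⟩
      have hfx : f x ≠ 0 := (hzero x).not.mpr hx
      have hy0 : y ≠ 0 := fun h => hfx <| by rw [← hy, h, hzero]
      obtain ⟨c, hc, rfl⟩ := hinj y x hy0 hx ⟨1, one_ne_zero, by rw [hy, one_smul]⟩
      have hcn : c ^ n = 1 :=
        smul_left_injective K hfx (by rw [← hhom, hy, one_smul] : c ^ n • f x = (1 : K) • f x)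
      refine ⟨⟨Units.mk0 c hc, ?_⟩, rfl⟩
      rw [mem_rootsOfUnity, ← Units.val_inj, Units.val_pow_eq_pow_val, Units.val_mk0, hcn,
        Units.val_one]

end HomogeneousMap

theorem stmt2_general (p m k ℓ : ℕ)
    (F : Type*) [Field F] [Fintype F] (hcard : Fintype.card F = p ^ m)
    (Fn : (Fin ℓ → F) → (Fin ℓ → F))
    (hhom : ∀ (lam : F) (x : Fin ℓ → F), Fn (lam • x) = lam ^ (p ^ k + 1) • Fn x)
    (hzero : ∀ x, Fn x = 0 ↔ x = 0)
    -- injectivity of the induced map on projective space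
    (hinj : ∀ x y : Fin ℓ → F, x ≠ 0 → y ≠ 0 →
      (∃ c : F, c ≠ 0 ∧ Fn x = c • Fn y) → ∃ c : F, c ≠ 0 ∧ x = c • y) :
    ∀ x : Fin ℓ → F, x ≠ 0 →
      Nat.card {y : Fin ℓ → F // Fn y = Fn x} = Nat.gcd (p ^ k + 1) (p ^ m - 1) := by
  intro x hx
  rw [← Nat.card_congr (rootsOfUnityEquivFiber hhom hzero hinj hx),
    FiniteField.card_rootsOfUnity, Nat.card_eq_fintype_card, hcard]

/-- a map on `F_q^ℓ` that is homogeneous of twisted degree `σ+1 = p^k+1`,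
vanishes only at `0`, and induces a bijection of the projective space
`P^(ℓ-1)(F_q)` is `gcd(σ+1, q-1)`-to-one on nonzero vectors. -/
theorem stmt2 (p m k ℓ : ℕ) (hp : p.Prime) (hm : 0 < m) (hℓ : 0 < ℓ)
    (F : Type*) [Field F] [Fintype F] (hcard : Fintype.card F = p ^ m)
    (Fn : (Fin ℓ → F) → (Fin ℓ → F))
    (hhom : ∀ (lam : F) (x : Fin ℓ → F), Fn (lam • x) = lam ^ (p ^ k + 1) • Fn x)
    (hzero : ∀ x, Fn x = 0 ↔ x = 0)
    -- injectivity of the induced map on projective space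
    (hinj : ∀ x y : Fin ℓ → F, x ≠ 0 → y ≠ 0 →
      (∃ c : F, c ≠ 0 ∧ Fn x = c • Fn y) → ∃ c : F, c ≠ 0 ∧ x = c • y)
    -- surjectivity of the induced map on projective space
    (hsurj : ∀ y : Fin ℓ → F, y ≠ 0 → ∃ x, x ≠ 0 ∧ ∃ c : F, c ≠ 0 ∧ Fn x = c • y) :
    ∀ x : Fin ℓ → F, x ≠ 0 →
      Nat.card {y : Fin ℓ → F // Fn y = Fn x} = Nat.gcd (p ^ k + 1) (p ^ m - 1) :=
  stmt2_general p m k ℓ F hcard Fn hhom hzero hinj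
end

section
/- Let P ∈ F_q[t; σ] be a twisted polynomial. Then P has a linear (degree-one) right divisor if and only if P has a linear left divisor. -/
open Polynomial

/-- Multiplication in the twisted polynomial ring `F_q[t; σ]`, with the rule
`t·a = σ(a)·t`, represented on the coefficient data of ordinary polynomials. -/
noncomputable def skewMul {F : Type*} [Field F] (σ : F → F) (P Q : Polynomial F) :
    Polynomial F :=
  ∑ i ∈ P.support, ∑ j ∈ Q.support,
    Polynomial.C (P.coeff i * σ^[i] (Q.coeff j)) * Polynomial.X ^ (i + j)

/-!
`t - b` right divides `P = ∑ aᵢ tⁱ` iff `∑ aᵢ Nᵢ(b) = 0`, where `Nᵢ(b) = σ^{i-1}(b) ⋯ σ(b) b`,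
and rewriting `P` in the opposite ring `F[t; σ⁻¹]` turns left divisors into right ones.
Over a finite field, `∑ aᵢ Nᵢ(b) = 0` says that the semilinear map `y ↦ ∑ aᵢ Nᵢ(b) σⁱ(y)` kills
`1`; its adjoint for the trace pairing `(u, y) ↦ Tr(u y)` then kills some `u ≠ 0`, and this `u`
produces the left root `σ⁻¹(b) σ⁻¹(u) / u`. The converse is the same argument for `σ⁻¹`.
-/

open Finset

section SkewMul

variable {F : Type*} [Field F]

lemma skewMul_eq_sum_sum (σ : F → F) (P Q : F[X]) :
    skewMul σ P Q = P.sum fun i a => Q.sum fun j c => monomial (i + j) (a * σ^[i] c) := by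
  simp only [skewMul, Polynomial.sum_def, C_mul_X_pow_eq_monomial]

lemma skewMul_zero_left (σ : F → F) (Q : F[X]) : skewMul σ 0 Q = 0 := by
  simp [skewMul]

lemma skewMul_add_left (σ : F → F) (P P' Q : F[X]) :
    skewMul σ (P + P') Q = skewMul σ P Q + skewMul σ P' Q := by
  simp only [skewMul_eq_sum_sum]
  exact sum_add_index _ _ _ (fun i => by simp [Polynomial.sum]) fun i a a' => by
    simp [add_mul, sum_add]

variable {R : Type*} [FunLike R F F] [RingHomClass R F F] (σ : R)

lemma skewMul_monomial_monomial (i j : ℕ) (a c : F) :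
    skewMul σ (monomial i a) (monomial j c) = monomial (i + j) (a * σ^[i] c) := by
  rw [skewMul_eq_sum_sum, sum_monomial_index, sum_monomial_index] <;> simp

lemma skewMul_add_right (P Q Q' : F[X]) :
    skewMul σ P (Q + Q') = skewMul σ P Q + skewMul σ P Q' := by
  simp only [skewMul_eq_sum_sum, ← sum_add]
  congr 1
  ext i a : 2
  exact sum_add_index _ _ _ (fun j => by simp) fun j c c' => by simp [mul_add]

lemma skewMul_monomial_X_sub_C (n : ℕ) (a b : F) :
    skewMul σ (monomial n a) (X - C b) = monomial (n + 1) a - monomial n (a * σ^[n] b) := by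
  rw [sub_eq_add_neg X, ← monomial_one_one_eq_X, ← C_neg, ← monomial_zero_left,
    skewMul_add_right, skewMul_monomial_monomial, skewMul_monomial_monomial]
  simp [sub_eq_add_neg]

end SkewMul

section SkewNorm

variable {M : Type*} [CommMonoid M]

/-- `tⁱ ≡ skewNorm σ b i` modulo right division by `t - b`. -/
def skewNorm (σ : M → M) (b : M) (i : ℕ) : M := ∏ j ∈ range i, σ^[j] b

@[simp] lemma skewNorm_zero (σ : M → M) (b : M) : skewNorm σ b 0 = 1 := rfl

lemma skewNorm_succ (σ : M → M) (b : M) (i : ℕ) :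
    skewNorm σ b (i + 1) = skewNorm σ b i * σ^[i] b :=
  prod_range_succ _ _

lemma skewNorm_succ' {R : Type*} [FunLike R M M] [MonoidHomClass R M M] (σ : R) (b : M)
    (i : ℕ) : skewNorm σ b (i + 1) = σ (skewNorm σ b i) * b := by
  simp only [skewNorm, prod_range_succ', map_prod, Function.iterate_succ_apply',
    Function.iterate_zero_apply]

lemma skewNorm_mul_eq_of_mul_eq {R : Type*} [FunLike R M M] [MonoidHomClass R M M] (τ : R)
    {c c' x : M} (h : c' * x = c * τ x) (i : ℕ) :
    skewNorm τ c' i * x = skewNorm τ c i * τ^[i] x := by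
  induction i with
  | zero => simp
  | succ i ih =>
    calc skewNorm τ c' (i + 1) * x = skewNorm τ c' i * x * τ^[i] c' := by
          rw [skewNorm_succ]; ac_rfl
      _ = skewNorm τ c i * τ^[i] (c' * x) := by rw [ih, iterate_map_mul]; ac_rfl
      _ = skewNorm τ c (i + 1) * τ^[i + 1] x := by
          rw [h, iterate_map_mul, skewNorm_succ, Function.iterate_succ_apply τ, mul_assoc]

lemma skewNorm_apply_of_leftInverse {R : Type*} [FunLike R M M] [MonoidHomClass R M M]
    {σ τ : R} (h : Function.LeftInverse τ σ) (b : M) (i : ℕ) :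
    skewNorm τ (τ b) i = τ^[i] (skewNorm σ b i) := by
  induction i with
  | zero => simp
  | succ i ih =>
    rw [skewNorm_succ, skewNorm_succ', iterate_map_mul, Function.iterate_succ_apply _ i (σ _), h,
      ih, Function.iterate_succ_apply]

end SkewNorm

section RightDivision

variable {F : Type*} [Field F]

/-- Evaluation at `b` in the sense of Lam–Leroy: the remainder of right division by `t - b`. -/
noncomputable def skewEval (σ : F → F) (b : F) : F[X] →ₗ[F] F :=
  lsum fun i => LinearMap.mulRight F (skewNorm σ b i)

lemma skewEval_eq_sum (σ : F → F) (b : F) (P : F[X]) :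
    skewEval σ b P = ∑ i ∈ P.support, P.coeff i * skewNorm σ b i := by
  simp [skewEval, Polynomial.sum_def]

lemma skewEval_monomial (σ : F → F) (b : F) (n : ℕ) (a : F) :
    skewEval σ b (monomial n a) = a * skewNorm σ b n := by
  simp [skewEval]

variable {R : Type*} [FunLike R F F] [RingHomClass R F F] (σ : R)

lemma skewEval_skewMul_X_sub_C (b : F) (Q : F[X]) :
    skewEval σ b (skewMul σ Q (X - C b)) = 0 := by
  induction Q using Polynomial.induction_on' with
  | add P Q hP hQ => rw [skewMul_add_left, map_add, hP, hQ, add_zero]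
  | monomial n a =>
    rw [skewMul_monomial_X_sub_C, map_sub, skewEval_monomial, skewEval_monomial, skewNorm_succ]
    ring

lemma exists_eq_skewMul_X_sub_C_add_C (b : F) (P : F[X]) :
    ∃ Q, P = skewMul σ Q (X - C b) + C (skewEval σ b P) := by
  induction P using Polynomial.induction_on' with
  | add P P' hP hP' =>
    obtain ⟨Q, hQ⟩ := hP
    obtain ⟨Q', hQ'⟩ := hP'
    refine ⟨Q + Q', ?_⟩
    rw [skewMul_add_left, map_add, C_add]
    nth_rw 1 [hQ, hQ']
    ring
  | monomial n a =>
    induction n generalizing a with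
    | zero =>
      refine ⟨0, ?_⟩
      rw [skewMul_zero_left, zero_add, skewEval_monomial, skewNorm_zero, mul_one,
        monomial_zero_left]
    | succ n ih =>
      -- `a t^(n+1) = a t^n (t - b) + a σ^n(b) t^n`
      obtain ⟨Q, hQ⟩ := ih (a * σ^[n] b)
      refine ⟨monomial n a + Q, ?_⟩
      have heval :
          skewEval σ b (monomial (n + 1) a) = skewEval σ b (monomial n (a * σ^[n] b)) := by
        rw [skewEval_monomial, skewEval_monomial, skewNorm_succ]
        ring
      rw [heval, skewMul_add_left, skewMul_monomial_X_sub_C, add_assoc, ← hQ, sub_add_cancel]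

theorem exists_eq_skewMul_X_sub_C_iff (b : F) (P : F[X]) :
    (∃ Q, P = skewMul σ Q (X - C b)) ↔ skewEval σ b P = 0 := by
  constructor
  · rintro ⟨Q, rfl⟩
    exact skewEval_skewMul_X_sub_C σ b Q
  · intro h
    obtain ⟨Q, hQ⟩ := exists_eq_skewMul_X_sub_C_add_C σ b P
    exact ⟨Q, by rwa [h, C_0, add_zero] at hQ⟩

end RightDivision

section SkewOp

variable {F : Type*} [Field F] (σ : F ≃+* F)

/-- Rewriting `∑ aᵢ tⁱ` as `∑ tⁱ σ⁻ⁱ(aᵢ)` identifies `F[t; σ]` with the opposite ring of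
`F[t; σ⁻¹]`. -/
noncomputable def skewOp : F[X] →+ F[X] :=
  AddMonoidHom.mk' (fun P => P.sum fun n a => monomial n (σ.symm^[n] a)) fun P Q =>
    sum_add_index _ _ _ (fun n => by simp) fun n a a' => by simp

lemma skewOp_monomial (n : ℕ) (a : F) :
    skewOp σ (monomial n a) = monomial n (σ.symm^[n] a) := by
  simp [skewOp]

lemma skewOp_X_sub_C (b : F) : skewOp σ (X - C b) = X - C b := by
  rw [map_sub, ← monomial_one_one_eq_X, ← monomial_zero_left, skewOp_monomial, skewOp_monomial]
  simp

lemma skewOp_symm_skewOp (P : F[X]) : skewOp σ.symm (skewOp σ P) = P := by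
  induction P using Polynomial.induction_on' with
  | add P Q hP hQ => rw [map_add, map_add, hP, hQ]
  | monomial n a =>
    rw [skewOp_monomial, skewOp_monomial, RingEquiv.symm_symm,
      Function.LeftInverse.iterate σ.apply_symm_apply]

lemma skewOp_skewMul (P Q : F[X]) :
    skewOp σ (skewMul σ P Q) = skewMul σ.symm (skewOp σ Q) (skewOp σ P) := by
  induction P using Polynomial.induction_on' with
  | add P P' hP hP' => rw [skewMul_add_left, map_add, hP, hP', map_add, skewMul_add_right]
  | monomial i a =>
    induction Q using Polynomial.induction_on' with
    | add Q Q' hQ hQ' => rw [skewMul_add_right, map_add, hQ, hQ', map_add, skewMul_add_left]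
    | monomial j c =>
      rw [skewMul_monomial_monomial, skewOp_monomial, skewOp_monomial, skewOp_monomial,
        skewMul_monomial_monomial, add_comm i j, Function.iterate_add_apply, iterate_map_mul,
        Function.LeftInverse.iterate σ.symm_apply_apply, iterate_map_mul, mul_comm]

lemma skewEval_skewOp (τ : F → F) (b : F) (P : F[X]) :
    skewEval τ b (skewOp σ P) = ∑ i ∈ P.support, σ.symm^[i] (P.coeff i) * skewNorm τ b i := by
  simp [skewOp, Polynomial.sum_def, map_sum, skewEval_monomial]

theorem exists_eq_X_sub_C_skewMul_iff (b : F) (P : F[X]) :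
    (∃ Q, P = skewMul σ (X - C b) Q) ↔ skewEval σ.symm b (skewOp σ P) = 0 := by
  rw [← exists_eq_skewMul_X_sub_C_iff]
  constructor
  · rintro ⟨Q, rfl⟩
    exact ⟨skewOp σ Q, by rw [skewOp_skewMul, skewOp_X_sub_C]⟩
  · rintro ⟨Q, hQ⟩
    refine ⟨skewOp σ.symm Q, ?_⟩
    rw [← skewOp_symm_skewOp σ P, hQ, skewOp_skewMul, skewOp_X_sub_C, RingEquiv.symm_symm]

end SkewOp

section AutTrace

variable {F : Type*} [Field F] [Finite F]

instance : Finite (F ≃+* F) :=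
  Finite.of_injective (fun g : F ≃+* F => (g : F → F)) DFunLike.coe_injective

noncomputable instance : Fintype (F ≃+* F) := Fintype.ofFinite _

noncomputable def autTrace : F →+ F := ∑ g : F ≃+* F, (g : F →+* F).toAddMonoidHom

lemma autTrace_apply (z : F) : autTrace z = ∑ g : F ≃+* F, g z := by
  simp [autTrace]

lemma autTrace_map (σ : F ≃+* F) (z : F) : autTrace (σ z) = autTrace z := by
  simp only [autTrace_apply]
  exact Fintype.sum_equiv (Equiv.mulRight σ) _ _ fun g => rfl

lemma autTrace_iterate (σ : F ≃+* F) (i : ℕ) (z : F) : autTrace (σ^[i] z) = autTrace z := by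
  rw [← RingAut.coe_pow, autTrace_map]

/-- Dedekind's independence of characters. -/
lemma exists_autTrace_ne_zero : ∃ z : F, autTrace z ≠ 0 := by
  by_contra! h
  have hind := (linearIndependent_monoidHom F F).comp (fun g : F ≃+* F => (g : F →* F))
    fun g g' hg => RingEquiv.ext (DFunLike.congr_fun (F := F →* F) hg)
  have := Fintype.linearIndependent_iff.mp hind (fun _ => 1) (funext fun z => by
    simpa [autTrace_apply] using h z)
  exact one_ne_zero (this (RingEquiv.refl F))

/-- `u ↦ ∑ σ⁻ⁱ(wᵢ u)` is the adjoint of `y ↦ ∑ wᵢ σⁱ(y)` for the nondegenerate pairing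
`(u, y) ↦ autTrace (u y)`, so one has a nonzero kernel iff the other has. -/
theorem exists_ne_zero_sum_symm_iterate_eq_zero (σ : F ≃+* F) (s : Finset ℕ) (w : ℕ → F)
    {y : F} (hy : y ≠ 0) (h : ∑ i ∈ s, w i * σ^[i] y = 0) :
    ∃ u ≠ 0, ∑ i ∈ s, σ.symm^[i] (w i * u) = 0 := by
  let Ψ : F →+ F := AddMonoidHom.mk' (fun u => ∑ i ∈ s, σ.symm^[i] (w i * u)) fun u v => by
    simp [mul_add, sum_add_distrib]
  by_contra! hΨ
  have hsurj : Function.Surjective Ψ := Finite.surjective_of_injective <|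
    (injective_iff_map_eq_zero Ψ).2 fun u hu => by_contra fun hu0 => hΨ u hu0 hu
  have hpair : ∀ u, autTrace (Ψ u * y) = 0 := fun u => calc
    autTrace (Ψ u * y) = ∑ i ∈ s, autTrace (σ.symm^[i] (w i * u) * y) := by
        simp only [Ψ, AddMonoidHom.mk'_apply, sum_mul, map_sum]
    _ = ∑ i ∈ s, autTrace (u * (w i * σ^[i] y)) := sum_congr rfl fun i _ => by
        rw [← autTrace_iterate σ i, iterate_map_mul,
          Function.LeftInverse.iterate σ.apply_symm_apply]
        ring_nf
    _ = autTrace (u * ∑ i ∈ s, w i * σ^[i] y) := by rw [mul_sum, map_sum]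
    _ = 0 := by rw [h, mul_zero, map_zero]
  obtain ⟨z, hz⟩ := exists_autTrace_ne_zero (F := F)
  obtain ⟨u, hu⟩ := hsurj (z / y)
  exact hz (by simpa [hu, hy] using hpair u)

end AutTrace

theorem exists_skewEval_symm_skewOp_eq_zero {F : Type*} [Field F] [Finite F] (σ : F ≃+* F)
    {P : F[X]} {b : F} (hb : skewEval σ b P = 0) :
    ∃ b', skewEval σ.symm b' (skewOp σ P) = 0 := by
  have h1 : ∑ i ∈ P.support, P.coeff i * skewNorm σ b i * σ^[i] 1 = 0 := by
    simpa [skewEval_eq_sum] using hb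
  obtain ⟨u, hu, hsum⟩ := exists_ne_zero_sum_symm_iterate_eq_zero σ P.support _ one_ne_zero h1
  -- conjugating the right root `b` by `u` gives a left root
  set b' := σ.symm b * σ.symm u / u
  have hb' : b' * u = σ.symm b * σ.symm u := div_mul_cancel₀ _ hu
  refine ⟨b', ?_⟩
  rw [skewEval_skewOp]
  refine (mul_eq_zero.mp ?_).resolve_right hu
  rw [sum_mul, ← hsum]
  refine sum_congr rfl fun i _ => ?_
  rw [mul_assoc, skewNorm_mul_eq_of_mul_eq σ.symm hb',
    skewNorm_apply_of_leftInverse σ.symm_apply_apply, iterate_map_mul, iterate_map_mul, mul_assoc]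

/-- a twisted polynomial over a finite field has a linear right
divisor iff it has a linear left divisor. -/
theorem stmt6 {F : Type*} [Field F] [Fintype F] (σ : F →+* F)
    (hσ : Function.Bijective σ) (P : Polynomial F) :
    (∃ (R : Polynomial F) (b : F), P = skewMul (⇑σ) R (X - C b)) ↔
    (∃ (R : Polynomial F) (b : F), P = skewMul (⇑σ) (X - C b) R) := by
  let e := RingEquiv.ofBijective σ hσ
  change (∃ R b, P = skewMul e R (X - C b)) ↔ ∃ R b, P = skewMul e (X - C b) R
  rw [exists_comm, exists_comm (α := F[X])]
  simp only [exists_eq_skewMul_X_sub_C_iff, exists_eq_X_sub_C_skewMul_iff]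
  constructor
  · rintro ⟨b, hb⟩
    exact exists_skewEval_symm_skewOp_eq_zero e hb
  · rintro ⟨b, hb⟩
    simpa [skewOp_symm_skewOp] using exists_skewEval_symm_skewOp_eq_zero e.symm hb
end

section
/- (Ore) Let σ = p^k be an automorphism of F_q and a, b, c ∈ F_q. The polynomial P(X) = aX^(σ²+σ+1) + bX^(σ+1) + cX + 1 ∈ F_q[X] has no roots in F_q if and only if the twisted polynomial F(t) = at³ + bt² + ct + 1 ∈ F_q[t; σ] has no linear right divisor. -/
open Polynomial

lemma skewMul_linear_coeff {F : Type*} [Field F] (σ : F → F) (h0 : σ 0 = 0) (h1 : σ 1 = 1)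
    (hneg : ∀ x, σ (-x) = - σ x) (P : Polynomial F) (s : F) (n : ℕ) :
    (skewMul σ P (X - C s)).coeff n =
      (if n = 0 then 0 else P.coeff (n-1)) - P.coeff n * σ^[n] s := by
  have hit1 : ∀ i : ℕ, σ^[i] (1 : F) = 1 := fun i => Function.iterate_fixed h1 i
  have hitneg : ∀ (i : ℕ) (x : F), σ^[i] (-x) = - σ^[i] x := by
    intro i
    induction i with
    | zero => simp
    | succ i ih => intro x; rw [Function.iterate_succ_apply, Function.iterate_succ_apply, hneg, ih]
  have hsupp : (X - C s).support ⊆ {0, 1} := by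
    intro j hj
    rw [mem_support_iff] at hj
    simp only [coeff_sub, coeff_X, coeff_C] at hj
    by_contra h
    simp only [Finset.mem_insert, Finset.mem_singleton, not_or] at h
    obtain ⟨h0', h1'⟩ := h
    rw [if_neg (fun hh => h1' hh.symm), if_neg h0', sub_zero] at hj
    exact hj rfl
  have step1 : skewMul σ P (X - C s)
      = ∑ i ∈ P.support, (C (P.coeff i) * X ^ (i+1) - C (P.coeff i * σ^[i] s) * X ^ i) := by
    unfold skewMul
    refine Finset.sum_congr rfl (fun i _ => ?_)
    rw [Finset.sum_subset hsupp (fun j _ hj => ?_)]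
    · rw [Finset.sum_insert (by simp), Finset.sum_singleton]
      simp only [coeff_sub, coeff_X, coeff_C]
      norm_num
      rw [hitneg, hit1]
      rw [map_one, map_neg]
      ring
    · rw [notMem_support_iff] at hj
      rw [hj, Function.iterate_fixed h0, mul_zero, map_zero, zero_mul]
  rw [step1]
  rw [finset_sum_coeff]
  simp only [coeff_sub, coeff_C_mul, coeff_X_pow]
  rw [Finset.sum_sub_distrib]
  congr 1
  · rcases n with _ | m
    · simp
    · simp only [Nat.succ_ne_zero, if_false, Nat.succ_sub_one]
      have : ∀ i ∈ P.support, (P.coeff i * if m + 1 = i + 1 then (1:F) else 0)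
          = if i = m then P.coeff i else 0 := by
        intro i _
        by_cases h : i = m
        · subst h; simp
        · simp [h, Ne.symm h]
      rw [Finset.sum_congr rfl this, Finset.sum_ite_eq' P.support m]
      by_cases hm : m ∈ P.support
      · simp [hm]
      · simp [hm, notMem_support_iff.mp hm]
  · have : ∀ i ∈ P.support, (P.coeff i * σ^[i] s * if n = i then (1:F) else 0)
        = if i = n then P.coeff i * σ^[i] s else 0 := by
      intro i _
      by_cases h : i = n
      · subst h; simp
      · simp [h, Ne.symm h]
    rw [Finset.sum_congr rfl this, Finset.sum_ite_eq' P.support n]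
    by_cases hn : n ∈ P.support
    · simp [hn]
    · simp [hn, notMem_support_iff.mp hn]

/-- Ore: `aX^(σ²+σ+1) + bX^(σ+1) + cX + 1` has no root in `F_q` iff
the twisted polynomial `at³ + bt² + ct + 1 ∈ F_q[t;σ]` has no linear right
divisor, where `σ = p^k`. -/
theorem stmt7 (p k : ℕ) [Fact p.Prime] (F : Type*) [Field F] [Fintype F]
    [CharP F p] (a b c : F) :
    (∀ x : F, a * x ^ (p ^ (2 * k) + p ^ k + 1) + b * x ^ (p ^ k + 1) + c * x + 1 ≠ 0) ↔
    ¬ ∃ (R : Polynomial F) (s : F),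
        (C a * X ^ 3 + C b * X ^ 2 + C c * X + 1 : Polynomial F)
          = skewMul (fun x : F => x ^ (p ^ k)) R (X - C s) := by
  have hp : p.Prime := Fact.out
  set σ : F → F := fun x : F => x ^ (p ^ k) with hσ
  have h0 : σ 0 = 0 := zero_pow (pow_ne_zero k hp.ne_zero)
  have h1 : σ 1 = 1 := one_pow _
  have hneg : ∀ x : F, σ (-x) = - σ x := by
    intro x
    show (-x) ^ (p ^ k) = - x ^ (p ^ k)
    rw [neg_eq_neg_one_mul, mul_pow, neg_one_pow_char_pow F, neg_one_mul]
  have hiter : ∀ (i : ℕ) (x : F), σ^[i] x = x ^ p ^ (k * i) := by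
    intro i
    induction i with
    | zero => intro x; simp
    | succ i ih =>
        intro x
        rw [Function.iterate_succ_apply', ih]
        show (x ^ p ^ (k * i)) ^ (p ^ k) = _
        rw [← pow_mul, ← pow_add, Nat.mul_succ]
  have hpow : ∀ x : F, a * x ^ (p ^ (2 * k) + p ^ k + 1) + b * x ^ (p ^ k + 1) + c * x + 1
      = a * (x ^ p ^ (k * 2) * x ^ p ^ k * x) + b * (x ^ p ^ k * x) + c * x + 1 := by
    intro x
    rw [pow_add, pow_add, pow_one, pow_add, pow_one, Nat.mul_comm k 2]
  constructor
  · rintro hroots ⟨R, s, hEq⟩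
    have hc : ∀ n, (C a * X ^ 3 + C b * X ^ 2 + C c * X + 1 : Polynomial F).coeff n
        = (if n = 0 then 0 else R.coeff (n-1)) - R.coeff n * s ^ p ^ (k * n) := by
      intro n
      rw [hEq, skewMul_linear_coeff σ h0 h1 hneg R s n, hiter]
    have e0 : (1 : F) = - (R.coeff 0 * s) := by
      have := hc 0; simpa using this
    have e1 : c = R.coeff 0 - R.coeff 1 * s ^ p ^ k := by
      have := hc 1; simpa [coeff_one, Nat.mul_one] using this
    have e2 : b = R.coeff 1 - R.coeff 2 * s ^ p ^ (k * 2) := by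
      have := hc 2; simpa [coeff_one] using this
    have e3 : a = R.coeff 2 - R.coeff 3 * s ^ p ^ (k * 3) := by
      have := hc 3; simpa [coeff_one] using this
    have e_hi : ∀ n, 4 ≤ n → R.coeff (n-1) = R.coeff n * s ^ p ^ (k * n) := by
      intro n hn
      have h := hc n
      have hL : (C a * X ^ 3 + C b * X ^ 2 + C c * X + 1 : Polynomial F).coeff n = 0 := by
        simp only [coeff_add, coeff_C_mul, coeff_X_pow, coeff_X, coeff_one]
        rw [if_neg (by omega), if_neg (by omega), if_neg (by omega), if_neg (by omega)]
        ring
      rw [hL, if_neg (by omega)] at h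
      linear_combination -h
    have hz : ∀ d m, 3 ≤ m → R.natDegree < m + d → R.coeff m = 0 := by
      intro d
      induction d with
      | zero => intro m _ hdeg; exact coeff_eq_zero_of_natDegree_lt (by omega)
      | succ d ih =>
          intro m hm hdeg
          by_cases h : R.natDegree < m
          · exact coeff_eq_zero_of_natDegree_lt h
          · have h5 : R.coeff (m+1) = 0 := ih (m+1) (by omega) (by omega)
            have h6 := e_hi (m+1) (by omega)
            simpa [h5] using h6
    have r3 : R.coeff 3 = 0 := hz (R.natDegree + 1) 3 le_rfl (by omega)
    refine hroots s ?_
    rw [hpow s]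
    rw [r3] at e3
    linear_combination (s ^ p ^ (k * 2) * s ^ p ^ k * s) * e3
      + (s ^ p ^ k * s) * e2 + s * e1 + e0
  · intro hndiv x hx
    apply hndiv
    rw [hpow x] at hx
    refine ⟨C a * X ^ 2 + C (b + a * x ^ p ^ (k * 2)) * X
      + C (c + b * x ^ p ^ k + a * (x ^ p ^ (k * 2) * x ^ p ^ k)), x, ?_⟩
    ext n
    rw [skewMul_linear_coeff σ h0 h1 hneg, hiter]
    rcases n with _ | _ | _ | _ | n
    · simp only [coeff_add, coeff_C_mul, coeff_X_pow, coeff_X, coeff_one, coeff_C]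
      norm_num
      linear_combination hx
    · simp only [coeff_add, coeff_C_mul, coeff_X_pow, coeff_X, coeff_one, coeff_C,
        Nat.mul_one]
      norm_num
      ring
    · simp only [coeff_add, coeff_C_mul, coeff_X_pow, coeff_X, coeff_one, coeff_C]
      norm_num
    · simp only [coeff_add, coeff_C_mul, coeff_X_pow, coeff_X, coeff_one, coeff_C]
      norm_num
    · simp only [coeff_add, coeff_C_mul, coeff_X_pow, coeff_X, coeff_one, coeff_C]
      split_ifs <;> first | (exfalso; assumption) | (exfalso; omega) | ring
end

section
/- In the twisted polynomial ring F_{q²}[t; σ], for b ∈ F_{q²} \ F_q, the least common left multiple of (t - b) and (t - b^q) is R = t² - ((b^{σ+1} - b^{q(σ+1)})/(b - b^q)) t + b^{q+1}·(b^σ - b^{σq})/(b - b^q), and both coefficients of R lie in F_q, so R ∈ F_q[t; σ]. -/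
open Polynomial

section SkewDev

variable {K : Type*} [Field K] (p k : ℕ) [Fact p.Prime] [CharP K p]

/-- The skew multiplication, written via `Polynomial.sum`. -/
noncomputable def sm (P Q : Polynomial K) : Polynomial K :=
  P.sum fun i a => C a * X ^ i * Q.map (iterateFrobenius K p (k * i))

lemma skewMul_eq_sm : skewMul (fun x : K => x ^ p ^ k) = sm p k := by
  funext P Q
  have hiter : ∀ i : ℕ, (fun x : K => x ^ p ^ k)^[i] = ⇑(iterateFrobenius K p (k * i)) := by
    intro i
    rw [show (fun x : K => x ^ p ^ k) = ⇑(iterateFrobenius K p k) from rfl,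
      coe_iterateFrobenius, coe_iterateFrobenius, ← Function.iterate_mul]
  rw [skewMul, sm, Polynomial.sum_def]
  refine Finset.sum_congr rfl fun i _ => ?_
  conv_rhs => rw [Q.as_sum_support]
  rw [Polynomial.map_sum, Finset.mul_sum]
  refine Finset.sum_congr rfl fun j _ => ?_
  rw [hiter, map_monomial, C_mul_X_pow_eq_monomial, C_mul_X_pow_eq_monomial,
    monomial_mul_monomial]

lemma sm_zero_left (Q : Polynomial K) : sm p k 0 Q = 0 := by
  simp [sm]

lemma sm_add_left (P₁ P₂ Q : Polynomial K) :
    sm p k (P₁ + P₂) Q = sm p k P₁ Q + sm p k P₂ Q := by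
  rw [sm, sm, sm]
  apply Polynomial.sum_add_index <;> intros <;> simp [add_mul]

lemma sm_add_right (P Q₁ Q₂ : Polynomial K) :
    sm p k P (Q₁ + Q₂) = sm p k P Q₁ + sm p k P Q₂ := by
  rw [sm, sm, sm, Polynomial.sum_def, Polynomial.sum_def, Polynomial.sum_def,
    ← Finset.sum_add_distrib]
  refine Finset.sum_congr rfl fun i _ => ?_
  rw [Polynomial.map_add, mul_add]

lemma sm_sub_left (P₁ P₂ Q : Polynomial K) :
    sm p k (P₁ - P₂) Q = sm p k P₁ Q - sm p k P₂ Q := by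
  have := sm_add_left p k (P₁ - P₂) P₂ Q
  rw [sub_add_cancel] at this
  rw [this]; ring

lemma sm_monomial_left (n : ℕ) (a : K) (Q : Polynomial K) :
    sm p k (monomial n a) Q = C a * X ^ n * Q.map (iterateFrobenius K p (k * n)) := by
  rw [sm]
  apply Polynomial.sum_monomial_index
  simp

lemma sm_C_left (e : K) (Q : Polynomial K) : sm p k (C e) Q = C e * Q := by
  rw [← monomial_zero_left, sm_monomial_left]
  simp [iterateFrobenius_zero]

lemma sm_monomial_monomial (i j : ℕ) (a c : K) :
    sm p k (monomial i a) (monomial j c) =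
      monomial (i + j) (a * iterateFrobenius K p (k * i) c) := by
  rw [sm_monomial_left, map_monomial, C_mul_X_pow_eq_monomial, monomial_mul_monomial]

lemma sm_assoc (P Q R : Polynomial K) :
    sm p k P (sm p k Q R) = sm p k (sm p k P Q) R := by
  induction P using Polynomial.induction_on' with
  | add P₁ P₂ h₁ h₂ =>
    rw [sm_add_left, sm_add_left, sm_add_left, h₁, h₂]
  | monomial i a =>
    induction Q using Polynomial.induction_on' with
    | add Q₁ Q₂ h₁ h₂ =>
      rw [sm_add_left p k Q₁ Q₂ R, sm_add_right, sm_add_right p k ((monomial i) a) Q₁ Q₂, sm_add_left, h₁, h₂]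
    | monomial j c =>
      rw [sm_monomial_monomial, sm_monomial_left, sm_monomial_left, sm_monomial_left,
        Polynomial.map_mul, Polynomial.map_mul, map_C, Polynomial.map_pow, map_X,
        map_map, ← iterateFrobenius_add, C_mul]
      have hk : k * i + k * j = k * (i + j) := by ring
      rw [hk]
      ring

lemma sm_coeff_top (P Q : Polynomial K) (hP : P ≠ 0) :
    (sm p k P Q).coeff (P.natDegree + Q.natDegree) =
      P.leadingCoeff * iterateFrobenius K p (k * P.natDegree) Q.leadingCoeff := by
  rw [sm, Polynomial.sum_def, finset_sum_coeff]
  rw [Finset.sum_eq_single P.natDegree]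
  · rw [mul_assoc, coeff_C_mul,
      show P.natDegree + Q.natDegree = Q.natDegree + P.natDegree from add_comm _ _,
      coeff_X_pow_mul, coeff_map]
    rfl
  · intro i hi hne
    have hile : i ≤ P.natDegree := le_natDegree_of_mem_supp i hi
    have hilt : i < P.natDegree := lt_of_le_of_ne hile hne
    have hiN : i ≤ P.natDegree + Q.natDegree := le_trans hile (Nat.le_add_right _ _)
    rw [mul_assoc, coeff_C_mul,
      show P.natDegree + Q.natDegree = (P.natDegree + Q.natDegree - i) + i from
        (Nat.sub_add_cancel hiN).symm]
    rw [show ((X : Polynomial K) ^ i * Q.map (iterateFrobenius K p (k * i))).coeff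
        (P.natDegree + Q.natDegree - i + i) = (Q.map (iterateFrobenius K p (k * i))).coeff
        (P.natDegree + Q.natDegree - i) from by
      rw [mul_comm]; exact coeff_mul_X_pow _ _ _]
    rw [coeff_map, Q.coeff_eq_zero_of_natDegree_lt (by omega), map_zero, mul_zero]
  · intro h
    exact absurd (Polynomial.natDegree_mem_support_of_nonzero hP) h

/-- If `sm U (X - C c)` has degree < 2 then `U` is a constant and the product is
`C e * (X - C c)`. -/
lemma sm_linear_remainder (U : Polynomial K) (c : K)
    (hdeg : (sm p k U (X - C c)).degree < 2) :
    ∃ e : K, sm p k U (X - C c) = C e * (X - C c) := by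
  by_cases hU : U = 0
  · exact ⟨0, by rw [hU, sm_zero_left, map_zero, zero_mul]⟩
  · have htop := sm_coeff_top p k U (X - C c) hU
    rw [natDegree_X_sub_C, leadingCoeff_X_sub_C, map_one, mul_one] at htop
    have hne0 : (sm p k U (X - C c)).coeff (U.natDegree + 1) ≠ 0 := by
      rw [htop]; exact leadingCoeff_ne_zero.mpr hU
    have h1 := lt_of_le_of_lt (le_degree_of_ne_zero hne0) hdeg
    have h2 : U.natDegree + 1 < 2 := by exact_mod_cast h1
    have hnd : U.natDegree = 0 := by omega
    obtain ⟨e, rfl⟩ : ∃ e, U = C e := ⟨U.coeff 0, (Polynomial.eq_C_of_natDegree_eq_zero hnd)⟩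
    exact ⟨e, sm_C_left p k e _⟩

/-- Division with remainder by a monic degree-2 polynomial on the right. -/
lemma sm_divmod (Rm : Polynomial K) (hRm : Rm.Monic) (hRd : Rm.natDegree = 2) :
    ∀ n (L : Polynomial K), L.natDegree ≤ n →
      ∃ M r : Polynomial K, L = sm p k M Rm + r ∧ r.degree < 2 := by
  intro n
  induction n with
  | zero =>
    intro L hL
    refine ⟨0, L, by rw [sm_zero_left, zero_add], ?_⟩
    refine lt_of_le_of_lt degree_le_natDegree ?_
    rw [Nat.le_zero.mp hL]
    exact_mod_cast Nat.zero_lt_two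
  | succ n ih =>
    intro L hL
    by_cases hd : L.degree < 2
    · exact ⟨0, L, by rw [sm_zero_left, zero_add], hd⟩
    · push_neg at hd
      have hL0 : L ≠ 0 := by
        rintro rfl
        rw [degree_zero] at hd
        exact absurd hd (by simp)
      have hnd2 : 2 ≤ L.natDegree := by
        rw [degree_eq_natDegree hL0] at hd
        exact_mod_cast hd
      set a := L.leadingCoeff with ha_def
      set md := L.natDegree - 2 with hmd
      set T := Rm.map (iterateFrobenius K p (k * md)) with hT_def
      have hT : T.Monic := hRm.map _
      have hTd : T.natDegree = 2 := by rw [hT_def, hRm.natDegree_map, hRd]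
      have hW : ((X : Polynomial K) ^ md * T).Monic := (monic_X_pow md).mul hT
      have hWd : ((X : Polynomial K) ^ md * T).natDegree = L.natDegree := by
        rw [natDegree_mul (monic_X_pow md).ne_zero hT.ne_zero, natDegree_X_pow, hTd]
        omega
      have hS : sm p k (monomial md a) Rm = C a * (X ^ md * T) := by
        rw [sm_monomial_left, ← hT_def]; ring
      have ha : a ≠ 0 := leadingCoeff_ne_zero.mpr hL0
      have hdegS : (C a * (X ^ md * T)).degree = L.degree := by
        rw [degree_mul, degree_C ha, zero_add, degree_eq_natDegree hW.ne_zero, hWd,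
          degree_eq_natDegree hL0]
      have hlc : (C a * ((X : Polynomial K) ^ md * T)).leadingCoeff = a := by
        rw [leadingCoeff_mul, leadingCoeff_C, hW.leadingCoeff, mul_one]
      have hsub := degree_sub_lt hdegS.symm hL0 hlc.symm
      have hL'nd : (L - C a * (X ^ md * T)).natDegree ≤ n := by
        by_cases h0 : L - C a * (X ^ md * T) = 0
        · simp [h0]
        · have := natDegree_lt_natDegree h0 hsub
          omega
      obtain ⟨M', r, hMr, hr⟩ := ih (L - C a * (X ^ md * T)) hL'nd
      refine ⟨monomial md a + M', r, ?_, hr⟩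
      rw [sm_add_left, hS, add_assoc, ← hMr]
      ring

lemma sm_X_left (Q : Polynomial K) :
    sm p k X Q = X * Q.map (iterateFrobenius K p k) := by
  rw [show (X : Polynomial K) = monomial 1 1 from (monomial_one_one_eq_X).symm,
    sm_monomial_left, mul_one, C_1, one_mul, pow_one, monomial_one_one_eq_X]

lemma sm_linear_linear (c a : K) :
    sm p k (X - C c) (X - C a) = X ^ 2 - C (a ^ p ^ k + c) * X + C (c * a) := by
  rw [sm_sub_left, sm_C_left, sm_X_left, Polynomial.map_sub, map_X, map_C,
    iterateFrobenius_def, C_add, C_mul]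
  ring

end SkewDev

/-- in `F_{q²}[t;σ]`, for `b ∉ F_q`, the least common left multiple of
`(t - b)` and `(t - b^q)` is
`R = t² - ((b^{σ+1} - b^{q(σ+1)})/(b - b^q)) t + b^{q+1}(b^σ - b^{σq})/(b - b^q)`,
and both coefficients of `R` lie in `F_q` (i.e. are fixed by `x ↦ x^q`). -/



theorem stmt9 (p m k : ℕ) [Fact p.Prime] (K : Type*) [Field K] [Fintype K]
    [CharP K p] (hcard : Fintype.card K = (p ^ m) ^ 2) (hm : 0 < m)
    (b : K) (hb : b ^ (p ^ m) ≠ b)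
    (q s : ℕ) (hq : q = p ^ m) (hs : s = p ^ k)
    (σ : K → K) (hσ : σ = fun x : K => x ^ (p ^ k))
    (d₁ d₀ : K)
    (hd₁ : d₁ = (b ^ (s + 1) - b ^ (q * (s + 1))) / (b - b ^ q))
    (hd₀ : d₀ = b ^ (q + 1) * (b ^ s - b ^ (s * q)) / (b - b ^ q))
    (R : Polynomial K) (hR : R = X ^ 2 - C d₁ * X + C d₀) :
    -- R is a left multiple of (t - b)
    (∃ A : Polynomial K, R = skewMul σ A (X - C b)) ∧
    -- R is a left multiple of (t - b^q)
    (∃ A : Polynomial K, R = skewMul σ A (X - C (b ^ q))) ∧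
    -- every common left multiple of (t - b) and (t - b^q) is a left multiple of R
    (∀ L : Polynomial K,
      (∃ A : Polynomial K, L = skewMul σ A (X - C b)) →
      (∃ A : Polynomial K, L = skewMul σ A (X - C (b ^ q))) →
      ∃ M : Polynomial K, L = skewMul σ M R) ∧
    -- the coefficients of R lie in F_q
    d₁ ^ q = d₁ ∧ d₀ ^ q = d₀ := by
  subst hq hs hσ hd₁ hd₀ hR
  rw [skewMul_eq_sm p k]
  have hpm0 : p ^ m ≠ 0 := pow_ne_zero _ (Nat.Prime.pos Fact.out).ne'
  have hb0 : b ≠ 0 := by rintro rfl; exact hb (zero_pow hpm0)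
  have hΔ : b - b ^ p ^ m ≠ 0 := sub_ne_zero.mpr (Ne.symm hb)
  have hbq0 : b ^ p ^ m ≠ 0 := pow_ne_zero _ hb0
  set D1 : K := (b ^ (p ^ k + 1) - b ^ (p ^ m * (p ^ k + 1))) / (b - b ^ p ^ m) with hD1
  set D0 : K := b ^ (p ^ m + 1) * (b ^ p ^ k - b ^ (p ^ k * p ^ m)) / (b - b ^ p ^ m) with hD0
  have key1 : b ^ p ^ k + D0 / b = D1 := by
    rw [hD0, hD1]; field_simp; ring
  have key1' : (b ^ p ^ m) ^ p ^ k + D0 / b ^ p ^ m = D1 := by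
    rw [hD0, hD1]; field_simp; ring
  have key2 : D0 / b * b = D0 := div_mul_cancel₀ _ hb0
  have key2' : D0 / b ^ p ^ m * b ^ p ^ m = D0 := div_mul_cancel₀ _ hbq0
  have hfactb : (X ^ 2 - C D1 * X + C D0 : Polynomial K)
      = sm p k (X - C (D0 / b)) (X - C b) := by
    rw [sm_linear_linear, key1, key2]
  have hfactq : (X ^ 2 - C D1 * X + C D0 : Polynomial K)
      = sm p k (X - C (D0 / b ^ p ^ m)) (X - C (b ^ p ^ m)) := by
    rw [sm_linear_linear, key1', key2']
  have hcard' : b ^ (p ^ m * p ^ m) = b := by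
    have h := FiniteField.pow_card b
    rw [hcard, pow_two] at h
    exact h
  refine ⟨⟨X - C (D0 / b), hfactb⟩, ⟨X - C (D0 / b ^ p ^ m), hfactq⟩, ?_, ?_, ?_⟩
  · rintro L ⟨A, hA⟩ ⟨B, hB⟩
    have hRm : (X ^ 2 - C D1 * X + C D0 : Polynomial K).Monic := by
      monicity!
    have hRd : (X ^ 2 - C D1 * X + C D0 : Polynomial K).natDegree = 2 := by
      compute_degree!
    obtain ⟨M, r, hLr, hrdeg⟩ := sm_divmod p k _ hRm hRd L.natDegree L le_rfl
    refine ⟨M, ?_⟩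
    have hra : r = sm p k (A - sm p k M (X - C (D0 / b))) (X - C b) := by
      rw [sm_sub_left, ← sm_assoc, ← hfactb, ← hA, hLr]
      ring
    have hrb : r = sm p k (B - sm p k M (X - C (D0 / b ^ p ^ m))) (X - C (b ^ p ^ m)) := by
      rw [sm_sub_left, ← sm_assoc, ← hfactq, ← hB, hLr]
      ring
    obtain ⟨e, he⟩ := sm_linear_remainder p k _ b (by rw [← hra]; exact hrdeg)
    obtain ⟨f, hf⟩ := sm_linear_remainder p k _ (b ^ p ^ m) (by rw [← hrb]; exact hrdeg)
    have heq : C e * (X - C b) = C f * (X - C (b ^ p ^ m)) := by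
      rw [← he, ← hra, hrb, hf]
    have hc1 : e = f := by
      have h1 := congrArg (fun P : Polynomial K => P.coeff 1) heq
      simp only [mul_sub, coeff_sub, coeff_C_mul, coeff_X_one, coeff_C] at h1
      norm_num at h1
      exact h1
    have hc0 : e * b = f * b ^ p ^ m := by
      have h0 := congrArg (fun P : Polynomial K => P.coeff 0) heq
      simp only [mul_sub, coeff_sub, coeff_C_mul, coeff_X_zero, coeff_C] at h0
      norm_num at h0
      exact h0
    have he0 : e = 0 := by
      rw [← hc1] at hc0
      have : e * (b - b ^ p ^ m) = 0 := by rw [mul_sub, hc0, sub_self]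
      exact (mul_eq_zero.mp this).resolve_right hΔ
    have hr0 : r = 0 := by rw [hra, he, he0, map_zero, zero_mul]
    rw [hLr, hr0, add_zero]
  · have e1 : (b ^ (p ^ m * (p ^ k + 1))) ^ p ^ m = b ^ (p ^ k + 1) := by
      rw [← pow_mul, show p ^ m * (p ^ k + 1) * p ^ m = p ^ m * p ^ m * (p ^ k + 1) from by ring,
        pow_mul, hcard']
    have e2 : (b ^ p ^ m) ^ p ^ m = b := by rw [← pow_mul, hcard']
    rw [hD1, div_pow, sub_pow_char_pow, sub_pow_char_pow, e1, e2,
      div_eq_div_iff (sub_ne_zero.mpr hb) hΔ]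
    ring
  · have e2 : (b ^ p ^ m) ^ p ^ m = b := by rw [← pow_mul, hcard']
    have e3 : (b ^ (p ^ k * p ^ m)) ^ p ^ m = b ^ p ^ k := by
      rw [← pow_mul, show p ^ k * p ^ m * p ^ m = p ^ m * p ^ m * p ^ k from by ring,
        pow_mul, hcard']
    have e4 : (b ^ (p ^ m + 1)) ^ p ^ m = b * b ^ p ^ m := by
      rw [← pow_mul, show (p ^ m + 1) * p ^ m = p ^ m * p ^ m + p ^ m from by ring,
        pow_add, hcard']
    rw [hD0, div_pow, mul_pow, sub_pow_char_pow, sub_pow_char_pow, e2, e3, e4,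
      div_eq_div_iff (sub_ne_zero.mpr hb) hΔ]
    ring
end

section
/- Let q = 2^m, σ = 2^k, and let F ∈ SQH(ℓ, 2^m) with core F_{2^d}, m/d even, such that the induced map on P^(ℓ-1)(F_{2^m}) is bijective. Then for every nonzero a ∈ (F_{2^m})^ℓ, the kernel of the linear map L_a(x) = F(x+a) + F(x) + F(a) is exactly a·F_{2^d} = {λa : λ ∈ F_{2^d}}, a set of size 2^d. -/
/-!
Write `F x = B x x` with `B` linear in the first and `σ`-semilinear in the second variable,
so that in characteristic 2, `L_a x = B x a + B a x`. On the line `K a` this is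
`(ν + σ ν) • F a`, and `F a ≠ 0` because a surjective self-map of the finite projective space
is injective; so `ν` is fixed by `σ`, i.e. `ν ∈ 𝔽_{2^d}`. If `x ∉ K a` lies in the kernel,
then `B` is symmetric on `a, x` and `F (a + c x) = F a + (c + σ c) • B x a + c σ(c) • F x`
is unchanged under `c ↦ σ c` whenever `σ (σ c) = c`. As `m / d` is even, `𝔽_{2^{2d}} ⊆ K`
and `σ` acts on it as its nontrivial involution, so some `c` has `σ c ≠ c = σ (σ c)`;
injectivity on projective space then makes `a + c x` and `a + σ(c) x` proportional,
contradicting the independence of `a` and `x`.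
-/

open Function
open scoped LinearAlgebra.Projectivization

theorem isPeriodicPt_pow_iff {M : Type*} [Monoid M] {p n : ℕ} {x : M} :
    IsPeriodicPt (· ^ p) n x ↔ x ^ p ^ n = x := by
  rw [IsPeriodicPt, IsFixedPt, pow_iterate]

theorem Nat.mod_two_mul_gcd_eq_gcd {k m : ℕ} (hm : 0 < m) (heven : Even (m / k.gcd m)) :
    k % (2 * k.gcd m) = k.gcd m := by
  have hd : 0 < k.gcd m := Nat.gcd_pos_of_pos_right k hm
  have hodd : Odd (k / k.gcd m) := by
    refine Nat.not_even_iff_odd.1 fun h => ?_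
    have := Nat.dvd_gcd h.two_dvd heven.two_dvd
    rw [(Nat.coprime_div_gcd_div_gcd hd).gcd_eq_one] at this
    omega
  set d := k.gcd m
  rw [← Nat.mul_div_cancel' (Nat.gcd_dvd_left k m), mul_comm 2, Nat.mul_mod_mul_left,
    Nat.odd_iff.1 hodd, mul_one]

theorem IsPrimitiveRoot.card_pow_succ_eq_self {K : Type*} [Field K] {ζ : K} {n : ℕ}
    (h : IsPrimitiveRoot ζ n) (hn : 0 < n) : Nat.card {x : K // x ^ (n + 1) = x} = n + 1 := by
  classical
  have hroots : ∀ x : K,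
      x ^ (n + 1) = x ↔ x ∈ insert 0 (Polynomial.nthRootsFinset n (1 : K)) := by
    intro x
    rw [Finset.mem_insert, Polynomial.mem_nthRootsFinset hn, pow_succ, mul_left_eq_self₀, or_comm]
  rw [Nat.card_congr (Equiv.subtypeEquivRight hroots), Nat.card_eq_fintype_card, Fintype.card_coe,
    Finset.card_insert_of_notMem, h.card_nthRootsFinset]
  rw [Polynomial.mem_nthRootsFinset hn, zero_pow hn.ne']
  exact zero_ne_one

namespace FiniteField

variable {K : Type*} [Field K] [Fintype K]

theorem exists_isPrimitiveRoot_of_dvd {n : ℕ} (hn : n ∣ Fintype.card K - 1) :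
    ∃ ζ : K, IsPrimitiveRoot ζ n := by
  classical
  have hn0 : 0 < n := Nat.pos_of_dvd_of_pos hn (by have := Fintype.one_lt_card (α := K); omega)
  rw [← Fintype.card_units] at hn
  have hpos : 0 < (Finset.univ.filter fun u : Kˣ => orderOf u = n).card := by
    rw [IsCyclic.card_orderOf_eq_totient hn]
    exact Nat.totient_pos.2 hn0
  obtain ⟨ζ, hζ⟩ := Finset.card_pos.1 hpos
  exact ⟨ζ, IsPrimitiveRoot.coe_units_iff.2
    (IsPrimitiveRoot.iff_orderOf.2 (Finset.mem_filter.1 hζ).2)⟩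

variable {p m : ℕ}

theorem card_pow_pow_eq_self (hcard : Fintype.card K = p ^ m) {d : ℕ} (hd : d ∣ m) :
    Nat.card {x : K // x ^ p ^ d = x} = p ^ d := by
  have hdvd : p ^ d - 1 ∣ Fintype.card K - 1 := hcard ▸ Nat.pow_sub_one_dvd_pow_sub_one p hd
  obtain ⟨ζ, hζ⟩ := exists_isPrimitiveRoot_of_dvd hdvd
  have hpos : 0 < p ^ d - 1 :=
    Nat.pos_of_dvd_of_pos hdvd (by have := Fintype.one_lt_card (α := K); omega)
  have hsucc : p ^ d - 1 + 1 = p ^ d := by omega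
  simpa only [hsucc] using hζ.card_pow_succ_eq_self hpos

theorem pow_pow_eq_self_iff_pow_pow_gcd (hcard : Fintype.card K = p ^ m) {k : ℕ} {x : K} :
    x ^ p ^ k = x ↔ x ^ p ^ Nat.gcd k m = x := by
  simp only [← isPeriodicPt_pow_iff]
  have hm : IsPeriodicPt (· ^ p) m x := isPeriodicPt_pow_iff.2 (hcard ▸ pow_card x)
  exact ⟨fun hk => hk.gcd hm, fun hd => hd.trans_dvd (Nat.gcd_dvd_left k m)⟩

theorem exists_pow_pow_ne_self_of_even (hcard : Fintype.card K = p ^ m) {k : ℕ}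
    (heven : Even (m / Nat.gcd k m)) : ∃ x : K, x ^ p ^ k ≠ x ∧ (x ^ p ^ k) ^ p ^ k = x := by
  set d := Nat.gcd k m
  have hm : 0 < m := by
    refine Nat.pos_of_ne_zero fun h => ?_
    have := Fintype.one_lt_card (α := K)
    simp [hcard, h] at this
  have hp : 1 < p := by
    have := Fintype.one_lt_card (α := K)
    rw [hcard] at this
    exact (Nat.one_lt_pow_iff hm.ne').1 this
  have hd : 0 < d := Nat.gcd_pos_of_pos_right k hm
  have h2d : 2 * d ∣ m := by
    rw [← Nat.mul_div_cancel' (Nat.gcd_dvd_right k m), mul_comm 2]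
    exact Nat.mul_dvd_mul_left d heven.two_dvd
  have hlt : p ^ d < p ^ (2 * d) := Nat.pow_lt_pow_right hp (by omega)
  have hpd : 1 < p ^ d := Nat.one_lt_pow hd.ne' hp
  obtain ⟨ζ, hζ⟩ := exists_isPrimitiveRoot_of_dvd (K := K) (n := p ^ (2 * d) - 1)
    (hcard ▸ Nat.pow_sub_one_dvd_pow_sub_one p h2d)
  have hζ0 : ζ ≠ 0 := hζ.ne_zero (by omega)
  have hper : IsPeriodicPt (· ^ p) (2 * d) ζ := by
    rw [isPeriodicPt_pow_iff]
    conv_lhs => rw [← Nat.sub_add_cancel (hpd.trans hlt).le, pow_succ, hζ.pow_eq_one, one_mul]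
  have hnot : ζ ^ p ^ d ≠ ζ := by
    intro h
    have h1 : ζ ^ (p ^ d - 1) = 1 := by
      apply mul_right_cancel₀ hζ0
      rw [← pow_succ, Nat.sub_add_cancel hpd.le, one_mul, h]
    have := Nat.le_of_dvd (by omega) (hζ.dvd_of_pow_eq_one _ h1)
    omega
  have hit : ∀ n, ζ ^ p ^ n = (· ^ p)^[n] ζ := fun n => by rw [pow_iterate]
  refine ⟨ζ, ?_, ?_⟩
  · rwa [hit, ← hper.iterate_mod_apply, Nat.mod_two_mul_gcd_eq_gcd hm heven, ← hit]
  · rw [← pow_mul, ← pow_add, hit, ← two_mul]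
    exact (hper.trans_dvd (Nat.mul_dvd_mul_left 2 (Nat.gcd_dvd_left k m))).eq

end FiniteField

theorem apply_ne_zero_of_projectively_surjective {K V : Type*} [Field K] [AddCommGroup V]
    [Module K V] [Finite (ℙ K V)] {F : V → V}
    (hhom : ∀ (c : K) (x : V), c ≠ 0 → ∃ u : K, u ≠ 0 ∧ F (c • x) = u • F x)
    (hsurj : ∀ y : V, y ≠ 0 → ∃ x, x ≠ 0 ∧ ∃ c : K, c ≠ 0 ∧ F x = c • y)
    {a : V} (ha : a ≠ 0) : F a ≠ 0 := by
  choose x hx0 c hc0 hxc using hsurj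
  have hF : ∀ {v w : V} (hv : v ≠ 0) (hw : w ≠ 0), Projectivization.mk K v hv =
      Projectivization.mk K w hw → ∃ u : K, u ≠ 0 ∧ F v = u • F w := by
    intro v w hv hw h
    obtain ⟨t, rfl⟩ := (Projectivization.mk_eq_mk_iff' K _ w hv hw).1 h
    exact hhom t w (left_ne_zero_of_smul hv)
  let g : ℙ K V → ℙ K V := fun p => Projectivization.mk K (x p.rep p.rep_nonzero) (hx0 _ _)
  have hg : Injective g := by
    intro p q hpq
    obtain ⟨u, -, hu⟩ := hF _ _ hpq
    rw [hxc, hxc, smul_smul] at hu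
    rw [← p.mk_rep, ← q.mk_rep, Projectivization.mk_eq_mk_iff']
    exact ⟨(c p.rep p.rep_nonzero)⁻¹ * (u * c q.rep q.rep_nonzero),
      by rw [mul_smul, ← hu, inv_smul_smul₀ (hc0 _ _)]⟩
  obtain ⟨p, hp⟩ := Finite.surjective_of_injective hg (Projectivization.mk K a ha)
  obtain ⟨u, hu0, hu⟩ := hF ha (hx0 _ _) hp.symm
  rw [hu, hxc]
  exact smul_ne_zero hu0 (smul_ne_zero (hc0 _ _) p.rep_nonzero)

theorem LinearIndependent.eq_of_add_smul_eq_smul_add {R M : Type*} [CommRing R] [AddCommGroup M]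
    [Module R M] {a x : M} (h : LinearIndependent R ![a, x]) {s t r : R}
    (hst : a + s • x = t • (a + r • x)) : s = r := by
  have hzero : (1 - t) • a + (s - t * r) • x = 0 := by
    linear_combination (norm := module) hst
  obtain ⟨ht, hs⟩ := LinearIndependent.pair_iff.1 h _ _ hzero
  rw [sub_eq_zero] at ht hs
  rw [hs, ← ht, one_mul]

-- `x ↦ semiquadForm σ C x x` is the `σ`-semiquadratic map with coefficient matrices `C i`.
def semiquadForm {K ι : Type*} [CommSemiring K] [Fintype ι] (σ : K →+* K)
    (C : ι → Matrix ι ι K) : (ι → K) →ₗ[K] (ι → K) →ₛₗ[σ] ι → K :=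
  LinearMap.mk₂'ₛₗ (RingHom.id K) σ (fun u v i => ∑ s, ∑ t, u s * C i s t * σ (v t))
    (fun _ _ _ => by ext; simp only [Pi.add_apply, add_mul, Finset.sum_add_distrib])
    (fun _ _ _ => by
      ext; simp only [Pi.smul_apply, smul_eq_mul, RingHom.id_apply, Finset.mul_sum, mul_assoc])
    (fun _ _ _ => by ext; simp only [Pi.add_apply, map_add, mul_add, Finset.sum_add_distrib])
    (fun _ _ _ => by
      ext; simp only [Pi.smul_apply, smul_eq_mul, map_mul, Finset.mul_sum]
      exact Finset.sum_congr rfl fun _ _ => Finset.sum_congr rfl fun _ _ => by ring)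

theorem LinearMap.apply_smul_smul_self {K V W : Type*} [CommSemiring K] [AddCommMonoid V]
    [Module K V] [AddCommMonoid W] [Module K W] {σ : K →+* K} (B : V →ₗ[K] V →ₛₗ[σ] W)
    (c : K) (x : V) : B (c • x) (c • x) = (c * σ c) • B x x := by
  rw [LinearMap.map_smul₂, LinearMap.map_smulₛₗ, smul_smul]

theorem CharTwo.add_self_eq_zero_of_module (K : Type*) {W : Type*} [Ring K] [CharP K 2]
    [AddCommGroup W] [Module K W] (w : W) : w + w = 0 := by
  rw [← two_smul K, CharTwo.two_eq_zero, zero_smul]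

section CharTwo

variable {K V W : Type*} [Field K] [CharP K 2] [AddCommGroup V] [Module K V] [AddCommGroup W]
  [Module K W] {σ : K →+* K} (B : V →ₗ[K] V →ₛₗ[σ] W)

theorem LinearMap.apply_add_add_self_add (x a : V) :
    B (x + a) (x + a) + B x x + B a a = B x a + B a x := by
  simp only [map_add, LinearMap.add_apply]
  linear_combination (norm := module) CharTwo.add_self_eq_zero_of_module K (B x x) +
    CharTwo.add_self_eq_zero_of_module K (B a a)

theorem LinearMap.polar_smul_self_eq_zero_iff {a : V} (ha : B a a ≠ 0) {ν : K} :
    B (ν • a) a + B a (ν • a) = 0 ↔ σ ν = ν := by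
  rw [LinearMap.map_smul₂, LinearMap.map_smulₛₗ, ← add_smul, smul_eq_zero_iff_left ha,
    CharTwo.add_eq_zero, eq_comm]

theorem LinearMap.apply_add_smul_self_eq_of_polar_eq_zero {a x : V} (hx : B x a + B a x = 0)
    {c : K} (hc : σ (σ c) = c) :
    B (a + σ c • x) (a + σ c • x) = B (a + c • x) (a + c • x) := by
  have hsymm : B a x = B x a := by
    linear_combination (norm := module) hx - CharTwo.add_self_eq_zero_of_module K (B x a)
  have hexpand : ∀ c : K,
      B (a + c • x) (a + c • x) = B a a + (c + σ c) • B x a + (c * σ c) • B x x := by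
    intro c
    simp only [map_add, LinearMap.add_apply, LinearMap.map_smulₛₗ, LinearMap.smul_apply,
      RingHom.id_apply, hsymm]
    module
  rw [hexpand, hexpand, hc, add_comm (σ c), mul_comm (σ c)]

theorem LinearMap.polar_eq_zero_iff_exists_smul
    (hinj : ∀ x y : V, x ≠ 0 → y ≠ 0 → B x x = B y y → ∃ t : K, x = t • y)
    (hσ : ∃ c : K, σ c ≠ c ∧ σ (σ c) = c) {a : V} (ha : B a a ≠ 0) (x : V) :
    B x a + B a x = 0 ↔ ∃ ν : K, σ ν = ν ∧ x = ν • a := by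
  have ha0 : a ≠ 0 := by
    rintro rfl
    simp at ha
  refine ⟨fun hx => ?_, ?_⟩
  · by_cases hxa : ∃ ν : K, ν • a = x
    · obtain ⟨ν, rfl⟩ := hxa
      exact ⟨ν, (B.polar_smul_self_eq_zero_iff ha).1 hx, rfl⟩
    push Not at hxa
    have hli := (LinearIndependent.pair_iff' ha0).2 hxa
    have hne : ∀ c : K, a + c • x ≠ 0 := fun c h =>
      one_ne_zero (LinearIndependent.pair_iff.1 hli 1 c (by rwa [one_smul])).1
    obtain ⟨c, hc, hcc⟩ := hσ
    -- `c` and `σ c` give two non-proportional vectors with the same image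
    obtain ⟨t, ht⟩ := hinj _ _ (hne c) (hne (σ c))
      (B.apply_add_smul_self_eq_of_polar_eq_zero hx hcc).symm
    exact absurd (hli.eq_of_add_smul_eq_smul_add ht).symm hc
  · rintro ⟨ν, hν, rfl⟩
    exact (B.polar_smul_self_eq_zero_iff ha).2 hν

end CharTwo

theorem stmt13_general (m k d ℓ : ℕ)
    (hd : d = Nat.gcd k m) (heven : Even (m / d))
    (K : Type*) [Field K] [Fintype K] (hcard : Fintype.card K = 2 ^ m)
    (Fn : (Fin ℓ → K) → (Fin ℓ → K))
    -- F is σ-semiquadratic homogeneous with σ = 2^k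
    (hsq : ∃ C : Fin ℓ → Matrix (Fin ℓ) (Fin ℓ) K,
      ∀ x i, Fn x i = ∑ s, ∑ t, x s * C i s t * (x t) ^ (2 ^ k))
    -- injectivity of the induced map on projective space
    (hinj : ∀ x y : Fin ℓ → K, x ≠ 0 → y ≠ 0 →
      (∃ c : K, c ≠ 0 ∧ Fn x = c • Fn y) → ∃ c : K, c ≠ 0 ∧ x = c • y)
    -- surjectivity of the induced map on projective space
    (hsurj : ∀ y : Fin ℓ → K, y ≠ 0 → ∃ x, x ≠ 0 ∧ ∃ c : K, c ≠ 0 ∧ Fn x = c • y) :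
    ∀ a : Fin ℓ → K, a ≠ 0 →
      ({x : Fin ℓ → K | Fn (x + a) + Fn x + Fn a = 0}
          = {x : Fin ℓ → K | ∃ lam : K, lam ^ (2 ^ d) = lam ∧ x = lam • a}) ∧
      Nat.card {x : Fin ℓ → K // Fn (x + a) + Fn x + Fn a = 0} = 2 ^ d := by
  intro a ha
  subst hd
  obtain ⟨C, hC⟩ := hsq
  have : CharP K 2 := charP_of_card_eq_prime_pow hcard
  set B := semiquadForm (iterateFrobenius K 2 k) C
  obtain rfl : Fn = fun x => B x x := funext fun x => funext fun i => hC x i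
  beta_reduce at hinj hsurj ⊢
  have hFa : B a a ≠ 0 := apply_ne_zero_of_projectively_surjective
    (fun c x hc => ⟨_, mul_ne_zero hc ((map_ne_zero _).2 hc), B.apply_smul_smul_self c x⟩)
    hsurj ha
  have hker : ∀ x, B (x + a) (x + a) + B x x + B a a = 0 ↔
      ∃ lam : K, lam ^ 2 ^ Nat.gcd k m = lam ∧ x = lam • a := by
    intro x
    rw [B.apply_add_add_self_add, B.polar_eq_zero_iff_exists_smul
      (fun x y hx hy h => (hinj x y hx hy ⟨1, one_ne_zero, by rw [one_smul, h]⟩).imp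
        fun _ => And.right)
      (FiniteField.exists_pow_pow_ne_self_of_even hcard heven) hFa]
    exact exists_congr fun ν =>
      and_congr_left' (FiniteField.pow_pow_eq_self_iff_pow_pow_gcd hcard)
  have hset : {x | B (x + a) (x + a) + B x x + B a a = 0} =
      {x | ∃ lam : K, lam ^ 2 ^ Nat.gcd k m = lam ∧ x = lam • a} := Set.ext hker
  have himage : {x | ∃ lam : K, lam ^ 2 ^ Nat.gcd k m = lam ∧ x = lam • a} =
      (· • a) '' {lam : K | lam ^ 2 ^ Nat.gcd k m = lam} := by
    ext x
    simp [eq_comm]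
  refine ⟨hset, ?_⟩
  rw [← Set.coe_ofPred, hset, himage, Nat.card_image_of_injective (smul_left_injective K ha)]
  exact FiniteField.card_pow_pow_eq_self hcard (Nat.gcd_dvd_right k m)

/-- for `F ∈ SQH(ℓ, 2^m)` with core `F_{2^d}`, `m/d` even, inducing a
bijection of `P^(ℓ-1)(F_{2^m})`, the kernel of `L_a(x) = F(x+a) + F(x) + F(a)` is
exactly `a·F_{2^d}`, a set of size `2^d`, for every nonzero `a`. -/
theorem stmt13 (m k d ℓ : ℕ) (hm : 0 < m) (hk : 0 < k) (hℓ : 0 < ℓ)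
    (hd : d = Nat.gcd k m) (heven : Even (m / d))
    (K : Type*) [Field K] [Fintype K] (hcard : Fintype.card K = 2 ^ m)
    (Fn : (Fin ℓ → K) → (Fin ℓ → K))
    -- F is σ-semiquadratic homogeneous with σ = 2^k
    (hsq : ∃ C : Fin ℓ → Matrix (Fin ℓ) (Fin ℓ) K,
      ∀ x i, Fn x i = ∑ s, ∑ t, x s * C i s t * (x t) ^ (2 ^ k))
    -- injectivity of the induced map on projective space
    (hinj : ∀ x y : Fin ℓ → K, x ≠ 0 → y ≠ 0 →
      (∃ c : K, c ≠ 0 ∧ Fn x = c • Fn y) → ∃ c : K, c ≠ 0 ∧ x = c • y)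
    -- surjectivity of the induced map on projective space
    (hsurj : ∀ y : Fin ℓ → K, y ≠ 0 → ∃ x, x ≠ 0 ∧ ∃ c : K, c ≠ 0 ∧ Fn x = c • y) :
    ∀ a : Fin ℓ → K, a ≠ 0 →
      ({x : Fin ℓ → K | Fn (x + a) + Fn x + Fn a = 0}
          = {x : Fin ℓ → K | ∃ lam : K, lam ^ (2 ^ d) = lam ∧ x = lam • a}) ∧
      Nat.card {x : Fin ℓ → K // Fn (x + a) + Fn x + Fn a = 0} = 2 ^ d :=
  stmt13_general m k d ℓ hd heven K hcard Fn hsq hinj hsurj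
end

section
/- Let L(x) = Σ_{i=0}^{3m-1} c_i x^{2^i} be an invertible F_2-linear map on F_{2^{3m}} and let a ∈ F_{2^{3m}}^× be an element not contained in any proper subfield of F_{2^m} (with a ∈ F_{2^m}). If there exists a' with L(ax) = a'·L(x) for all x, then there exists k such that a' = a^{2^k} and c_i = 0 for all i not congruent to k modulo m. -/
/-!
Since every exponent `2^i` with `i < 3m` is smaller than `|K|`, the identity `L(ax) = a' L(x)`
can be compared coefficientwise, giving `c_i a^{2^i} = a' c_i` for every `i`. Invertibility of `L`
provides a nonzero coefficient `c_k`, whence `a' = a^{2^k}`, and every other nonzero `c_i` forces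
`a^{2^i} = a^{2^k}`. As `m` is the minimal period of `a` under squaring, this means `i ≡ k (mod m)`.
-/

open Function Polynomial

theorem Function.iterate_eq_iterate_iff_mod_minimalPeriod {α : Type*} {f : α → α} {x : α}
    (hx : 0 < minimalPeriod f x) {i j : ℕ} :
    f^[i] x = f^[j] x ↔ i % minimalPeriod f x = j % minimalPeriod f x := by
  rw [← iterate_mod_minimalPeriod_eq (n := i), ← iterate_mod_minimalPeriod_eq (n := j)]
  exact iterate_eq_iterate_iff_of_lt_minimalPeriod (Nat.mod_lt _ hx) (Nat.mod_lt _ hx)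

section PowPeriod

variable {M : Type*} [Monoid M] {a : M} {n m : ℕ}

theorem isPeriodicPt_pow_iff_s15 {l : ℕ} : IsPeriodicPt (· ^ n) l a ↔ a ^ n ^ l = a := by
  rw [IsPeriodicPt, IsFixedPt, pow_iterate]

theorem minimalPeriod_pow_eq (ham : a ^ n ^ m = a)
    (hmin : ∀ l, l ∣ m → a ^ n ^ l = a → l = m) : minimalPeriod (· ^ n) a = m :=
  hmin _ (isPeriodicPt_pow_iff_s15.2 ham).minimalPeriod_dvd
    (isPeriodicPt_pow_iff_s15.1 (isPeriodicPt_minimalPeriod _ a))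

theorem pow_pow_eq_pow_pow_iff_mod (hm : 0 < m) (ham : a ^ n ^ m = a)
    (hmin : ∀ l, l ∣ m → a ^ n ^ l = a → l = m) {i j : ℕ} :
    a ^ n ^ i = a ^ n ^ j ↔ i % m = j % m := by
  have hper := minimalPeriod_pow_eq ham hmin
  rw [← hper, ← iterate_eq_iterate_iff_mod_minimalPeriod (hper ▸ hm), pow_iterate, pow_iterate]

end PowPeriod

section CoeffComparison

variable {R ι : Type*} [CommRing R] [IsDomain R] [Fintype R] [Fintype ι]
  {e : ι → ℕ}

theorem eq_zero_of_forall_sum_mul_pow_eq_zero (he : Injective e)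
    (hlt : ∀ i, e i < Fintype.card R) {d : ι → R} (h : ∀ x, ∑ i, d i * x ^ e i = 0) (i : ι) :
    d i = 0 := by
  classical
  set P : R[X] := ∑ i, C (d i) * X ^ e i
  have hdeg : P.natDegree < Fintype.card R :=
    (natDegree_sum_le_of_forall_le _ _ fun i _ =>
      (natDegree_C_mul_X_pow_le _ _).trans (Nat.le_sub_one_of_lt (hlt i))).trans_lt
      (Nat.sub_lt Fintype.card_pos one_pos)
  have hP : P = 0 := by
    refine eq_zero_of_forall_eval_zero_of_natDegree_lt_card P (fun x => ?_) ?_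
    · simpa [P, eval_finsetSum] using h x
    · simpa [Cardinal.mk_fintype] using hdeg
  have hcoeff : P.coeff (e i) = d i := by
    simp [P, finsetSum_coeff, he.eq_iff]
  rw [← hcoeff, hP, coeff_zero]

theorem eq_pow_of_forall_sum_mul_pow_mul_eq (he : Injective e)
    (hlt : ∀ i, e i < Fintype.card R) {c : ι → R} {a a' : R}
    (h : ∀ x, ∑ i, c i * (a * x) ^ e i = a' * ∑ i, c i * x ^ e i) {i : ι} (hi : c i ≠ 0) :
    a' = a ^ e i := by
  have hdiff := eq_zero_of_forall_sum_mul_pow_eq_zero he hlt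
    (d := fun i => c i * a ^ e i - a' * c i) (fun x => by
      simp only [sub_mul, Finset.sum_sub_distrib, mul_assoc, ← mul_pow, Finset.mul_sum] at h ⊢
      rw [h x, sub_self]) i
  exact mul_left_cancel₀ hi (by linear_combination -hdiff)

end CoeffComparison

theorem stmt15_general (m : ℕ)
    (K : Type*) [Field K] [Fintype K]
    (hcard : Fintype.card K = 2 ^ (3 * m))
    (cc : Fin (3 * m) → K) (L : K → K)
    (hL : ∀ x : K, L x = ∑ i : Fin (3 * m), cc i * x ^ 2 ^ (i : ℕ))
    (hbij : Function.Bijective L)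
    (a : K) (ham : a ^ 2 ^ m = a)
    (hgen : ∀ l, l ∣ m → a ^ 2 ^ l = a → l = m)
    (a' : K) (ha' : ∀ x : K, L (a * x) = a' * L x) :
    ∃ k : Fin (3 * m), a' = a ^ 2 ^ (k : ℕ) ∧
      ∀ i : Fin (3 * m), (i : ℕ) % m ≠ (k : ℕ) % m → cc i = 0 := by
  have hinj : Injective fun i : Fin (3 * m) => 2 ^ (i : ℕ) :=
    (Nat.pow_right_injective le_rfl).comp Fin.val_injective
  have hlt (i : Fin (3 * m)) : 2 ^ (i : ℕ) < Fintype.card K :=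
    hcard ▸ Nat.pow_lt_pow_right one_lt_two i.isLt
  have hscale (x : K) :
      ∑ i, cc i * (a * x) ^ 2 ^ (i : ℕ) = a' * ∑ i, cc i * x ^ 2 ^ (i : ℕ) := by
    rw [← hL, ← hL, ha']
  obtain ⟨x, hx⟩ := hbij.surjective 1
  obtain ⟨k, -, hk⟩ := Finset.exists_ne_zero_of_sum_ne_zero (hL x ▸ hx ▸ one_ne_zero)
  have hm : 0 < m := by have := k.isLt; omega
  have ha'k := eq_pow_of_forall_sum_mul_pow_mul_eq hinj hlt hscale (left_ne_zero_of_mul hk)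
  refine ⟨k, ha'k, fun i hik => by_contra fun hi => hik ?_⟩
  exact (pow_pow_eq_pow_pow_iff_mod hm ham hgen).1
    ((eq_pow_of_forall_sum_mul_pow_mul_eq hinj hlt hscale hi).symm.trans ha'k)

/-- if an invertible linearized polynomial map
`L(x) = Σ_{i<3m} c_i x^{2^i}` on `F_{2^{3m}}` satisfies `L(ax) = a'·L(x)` for an
element `a ∈ F_{2^m}` lying in no proper subfield of `F_{2^m}`, then `a' = a^{2^k}`
for some `k` and `c_i = 0` for all `i ≢ k (mod m)`. -/
theorem stmt15 (m : ℕ) (hm : 0 < m)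
    (K : Type*) [Field K] [Fintype K] [CharP K 2]
    (hcard : Fintype.card K = 2 ^ (3 * m))
    (cc : Fin (3 * m) → K) (L : K → K)
    (hL : ∀ x : K, L x = ∑ i : Fin (3 * m), cc i * x ^ 2 ^ (i : ℕ))
    (hbij : Function.Bijective L)
    (a : K) (ha : a ≠ 0) (ham : a ^ 2 ^ m = a)
    (hgen : ∀ l, l ∣ m → a ^ 2 ^ l = a → l = m)
    (a' : K) (ha' : ∀ x : K, L (a * x) = a' * L x) :
    ∃ k : Fin (3 * m), a' = a ^ 2 ^ (k : ℕ) ∧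
      ∀ i : Fin (3 * m), (i : ℕ) % m ≠ (k : ℕ) % m → cc i = 0 :=
  stmt15_general m K hcard cc L hL hbij a ham hgen a' ha'
end

section
/- Let G(x) = x^{2^i + 1} on F_{2^n} with gcd(i, n) = 1 and n ≥ 5, and let L_1, L_2 be invertible F_2-linear maps on F_{2^n}. Then L_1 ∘ G = G ∘ L_2 if and only if there exist a ∈ F_{2^n}^× and 0 ≤ k < n with L_1(x) = a^{2^i+1} x^{2^k} and L_2(x) = a x^{2^k}. In particular, the linear automorphism group of G is isomorphic to ΓL(1, 2^n). -/
/-!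
Over `𝔽_{2^n}` every additive map is a unique linearized polynomial `x ↦ ∑ c_j x^{2^j}`,
`j ∈ ℤ/n`: the Frobenius powers are linearly independent because they are distinct monomials of
degree `< 2^n`. Write `L₁ = ∑ b_j x^{2^j}` and `L₂ = ∑ c_j x^{2^j}`. Every monomial in
`L₁(x^{2^i+1}) = L₂(x)^{2^i+1}` has the form `x^{2^a} x^{2^b}`, and once the exponent is reduced
below `2^n` it determines the unordered pair `{a, b}`. Comparing coefficients pair by pair gives
`c_{l-i}^{2^i} c_l = 0`, then `c_{A-i}^{2^i} c_B + c_{B-i}^{2^i} c_A = 0` for distinct `A, B`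
with `{A, B}` not of the form `{m + i, m}`, and `b_m = c_m^{2^i+1} + c_{m-i}^{2^i} c_{m+i}`.
If `4i ≢ 0 (mod n)`, which follows from `gcd(i, n) = 1` and `n ≥ 5`, the first two relations
force `c` to have a single nonzero entry `c_k = a`, and the third gives `b_k = a^{2^i+1}` and
`b_m = 0` for `m ≠ k`.
-/

open Finset Polynomial

theorem Polynomial.coeff_sum_C_mul_X_pow {R ι : Type*} [Semiring R] [Fintype ι]
    (d : ι → R) (e : ι → ℕ) (u : ℕ) [DecidablePred fun t => e t = u] :
    (∑ t, C (d t) * X ^ e t).coeff u = ∑ t with e t = u, d t := by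
  simp [sum_filter, eq_comm]

theorem Polynomial.natDegree_sum_C_mul_X_pow_le {R ι : Type*} [Semiring R] [Fintype ι]
    (d : ι → R) {e : ι → ℕ} {N : ℕ} (he : ∀ t, e t ≤ N) :
    (∑ t, C (d t) * X ^ e t).natDegree ≤ N :=
  natDegree_sum_le_of_forall_le _ _ fun t _ => natDegree_C_mul_X_pow_le _ _ |>.trans (he t)

theorem FiniteField.sum_fiber_eq_of_forall_sum_mul_pow_eq {K ι κ : Type*} [Field K] [Fintype K]
    [Fintype ι] [Fintype κ] {d : ι → K} {e : ι → ℕ} {d' : κ → K} {e' : κ → ℕ}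
    (he : ∀ t, e t < Fintype.card K) (he' : ∀ t, e' t < Fintype.card K)
    (h : ∀ x, ∑ t, d t * x ^ e t = ∑ t, d' t * x ^ e' t) (u : ℕ) :
    ∑ t with e t = u, d t = ∑ t with e' t = u, d' t := by
  classical
  have hpoly := eq_of_natDegree_lt_card_of_eval_eq _ _ Function.injective_id
    (by simpa [eval_finsetSum] using h)
    (max_le (natDegree_sum_C_mul_X_pow_le d (fun t => Nat.le_pred_of_lt (he t)))
      (natDegree_sum_C_mul_X_pow_le d' (fun t => Nat.le_pred_of_lt (he' t))) |>.trans_lt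
        (Nat.pred_lt Fintype.card_ne_zero))
  simpa only [coeff_sum_C_mul_X_pow] using congrArg (coeff · u) hpoly

namespace FiniteField

variable {K : Type*} [Field K] [Fintype K] {p n : ℕ}

theorem pow_pow_mod (hcard : Fintype.card K = p ^ n) (x : K) (m : ℕ) :
    x ^ p ^ (m % n) = x ^ p ^ m := by
  conv_rhs => rw [← Nat.div_add_mod m n, pow_add, pow_mul x, pow_mul p, ← hcard, pow_card_pow]

theorem pow_pow_val_natCast (hcard : Fintype.card K = p ^ n) (x : K) (m : ℕ) :
    x ^ p ^ (m : ZMod n).val = x ^ p ^ m := by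
  rw [ZMod.val_natCast, pow_pow_mod hcard]

theorem pow_pow_val_pow_pow [NeZero n] (hcard : Fintype.card K = p ^ n) (x : K) (a : ZMod n)
    (i : ℕ) : (x ^ p ^ a.val) ^ p ^ i = x ^ p ^ (a + i).val := by
  rw [← pow_mul, ← pow_add, ← pow_pow_val_natCast hcard, Nat.cast_add, ZMod.natCast_zmod_val]

end FiniteField

theorem AddMonoidHom.exists_eq_sum_mul_pow_pow {K : Type*} [Field K] [Fintype K] {p n : ℕ}
    [hp : Fact p.Prime] [CharP K p] [NeZero n] (hcard : Fintype.card K = p ^ n) (f : K →+ K) :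
    ∃ c : ZMod n → K, ∀ x, f x = ∑ j, c j * x ^ p ^ j.val := by
  let _ : Algebra (ZMod p) K := ZMod.algebra K p
  let frob (j : ZMod n) : K →ₗ[ZMod p] K :=
    (iterateFrobenius K p j.val).toAddMonoidHom.toZModLinearMap p
  have hexp_lt (j : ZMod n) : p ^ j.val < Fintype.card K :=
    hcard ▸ Nat.pow_lt_pow_right hp.out.one_lt j.val_lt
  have hind : LinearIndependent K frob := by
    rw [Fintype.linearIndependent_iff]
    intro g hg j
    have := FiniteField.sum_fiber_eq_of_forall_sum_mul_pow_eq (d := g) (d' := 0) hexp_lt hexp_lt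
      (fun x => by simpa [frob, iterateFrobenius_def] using LinearMap.congr_fun hg x) (p ^ j.val)
    simpa [sum_filter, (Nat.pow_right_injective hp.out.two_le).eq_iff,
      (ZMod.val_injective n).eq_iff] using this
  have hdim : Fintype.card (ZMod n) = Module.finrank K (K →ₗ[ZMod p] K) := by
    have := Module.card_eq_pow_finrank (K := ZMod p) (V := K)
    rw [ZMod.card, hcard] at this
    rw [ZMod.card, Module.finrank_linearMap_self, Nat.pow_right_injective hp.out.two_le this]
  obtain ⟨c, hc⟩ := (Submodule.mem_span_range_iff_exists_fun K).1
    ((hind.span_eq_top_of_card_eq_finrank' hdim).symm ▸ Submodule.mem_top :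
      f.toZModLinearMap p ∈ _)
  refine ⟨c, fun x => ?_⟩
  simpa [frob, iterateFrobenius_def] using (LinearMap.congr_fun hc x).symm

namespace ZMod

variable {n : ℕ}

/-- The binary digits of the exponent of `x ^ 2 ^ a * x ^ 2 ^ b` in `𝔽_{2^n}`, including the
carry `2 ^ a + 2 ^ a = 2 ^ (a + 1)`. -/
def pairBits : Sym2 (ZMod n) → Finset (ZMod n) :=
  Sym2.lift ⟨fun a b => if a = b then {a + 1} else {a, b}, fun a b => by
    by_cases h : a = b
    · simp [h]
    · simp [h, Ne.symm h, Finset.pair_comm]⟩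

theorem pairBits_mk (a b : ZMod n) :
    pairBits s(a, b) = if a = b then {a + 1} else {a, b} := rfl

def pairExp (z : Sym2 (ZMod n)) : ℕ := ∑ k ∈ pairBits z, 2 ^ k.val

theorem pairBits_injective : Function.Injective (pairBits (n := n)) := by
  intro z w
  induction z using Sym2.ind with | h a b => ?_
  induction w using Sym2.ind with | h c d => ?_
  simp only [pairBits_mk]
  split_ifs with hab hcd hcd
  · rw [Finset.singleton_inj, add_left_inj, hab, hcd]
    rintro rfl
    rfl
  · intro h
    simpa [hcd] using congrArg Finset.card h
  · intro h
    simpa [hab] using congrArg Finset.card h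
  · intro h
    ext x
    rw [← Sym2.mem_toFinset, Sym2.toFinset_mk_eq, h, ← Sym2.toFinset_mk_eq, Sym2.mem_toFinset]

variable [NeZero n]

theorem pairExp_eq_sum_image (z : Sym2 (ZMod n)) :
    pairExp z = ∑ k ∈ (pairBits z).image val, 2 ^ k :=
  (sum_image fun _ _ _ _ h => val_injective n h).symm

theorem pairExp_injective : Function.Injective (pairExp (n := n)) := by
  intro z w h
  rw [pairExp_eq_sum_image, pairExp_eq_sum_image] at h
  exact pairBits_injective (image_injective (val_injective n) (geomSum_injective le_rfl h))

theorem pairExp_lt (z : Sym2 (ZMod n)) : pairExp z < 2 ^ n := by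
  rw [pairExp_eq_sum_image]
  exact Nat.geomSum_lt le_rfl fun k hk => by
    obtain ⟨a, -, rfl⟩ := mem_image.1 hk
    exact a.val_lt

theorem pow_mul_pow_eq_pow_pairExp {K : Type*} [Field K] [Fintype K]
    (hcard : Fintype.card K = 2 ^ n) (x : K) (a b : ZMod n) :
    x ^ 2 ^ a.val * x ^ 2 ^ b.val = x ^ pairExp s(a, b) := by
  by_cases hab : a = b
  · rw [hab, ← pow_add, ← two_mul, ← pow_succ', ← FiniteField.pow_pow_val_natCast hcard]
    simp [pairExp, pairBits_mk]
  · rw [← pow_add, pairExp, pairBits_mk, if_neg hab, sum_pair hab]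

end ZMod

section CoeffRelation

variable {G R : Type*} [AddCommGroup G] [Fintype G] [DecidableEq G] {i : G}

/-- The coefficient identities of `L₁ (x ^ (2 ^ i + 1)) = L₂ x ^ (2 ^ i + 1)`, one for each
unordered pair of Frobenius exponents: `b` lists the coefficients of `L₁`, and `h (j, l)` is the
coefficient of `x ^ 2 ^ (j + i) * x ^ 2 ^ l` in the expansion of the right-hand side. -/
def GoldCoeffRelation [AddCommMonoid R] (i : G) (b : G → R) (h : G × G → R) : Prop :=
  ∀ z : Sym2 G, ∑ m with s(m + i, m) = z, b m = ∑ p with s(p.1 + i, p.2) = z, h p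

theorem filter_mk_add_eq_pair (A B : G) :
    ({p : G × G | s(p.1 + i, p.2) = s(A, B)} : Finset (G × G)) = {(A - i, B), (B - i, A)} := by
  ext ⟨x, y⟩
  simp [eq_sub_iff_add_eq]

namespace GoldCoeffRelation

section AddCommMonoid

variable [AddCommMonoid R] {b : G → R} {h : G × G → R}

theorem diag (hrel : GoldCoeffRelation i b h) (hi : i ≠ 0) (l : G) : h (l - i, l) = 0 := by
  have := hrel s(l, l)
  rw [filter_mk_add_eq_pair, pair_eq_singleton, sum_singleton, sum_eq_zero] at this
  · exact this.symm
  intro m hm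
  simp only [mem_filter, mem_univ, true_and, Sym2.eq_iff] at hm
  grind

theorem off_diag (hrel : GoldCoeffRelation i b h) {A B : G} (hAB : A ≠ B) (hA : A ≠ B + i)
    (hB : B ≠ A + i) : h (A - i, B) + h (B - i, A) = 0 := by
  have := hrel s(A, B)
  rw [filter_mk_add_eq_pair, sum_pair (by simp [hAB.symm]), sum_eq_zero] at this
  · exact this.symm
  intro m hm
  simp only [mem_filter, mem_univ, true_and, Sym2.eq_iff] at hm
  grind

theorem apply_eq (hrel : GoldCoeffRelation i b h) (hi : i + i ≠ 0) (m : G) :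
    b m = h (m, m) + h (m - i, m + i) := by
  have hfiber : ({m' | s(m' + i, m') = s(m + i, m)} : Finset G) = {m} := by
    ext m'
    simp only [mem_filter, mem_univ, true_and, Sym2.eq_iff, mem_singleton]
    grind
  have := hrel s(m + i, m)
  rwa [hfiber, sum_singleton, filter_mk_add_eq_pair, add_sub_cancel_right,
    sum_pair (by grind)] at this

end AddCommMonoid

variable [CommSemiring R] [NoZeroDivisors R] {q : ℕ} {b c : G → R}

theorem eq_of_ne_zero (hrel : GoldCoeffRelation i b fun p => c p.1 ^ q * c p.2)
    (hi : 4 • i ≠ 0) {j k : G} (hj : c j ≠ 0) (hk : c k ≠ 0) : j = k := by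
  have hi₁ : i ≠ 0 := fun h => hi (by simp [h])
  have hnext {j : G} (hj : c j ≠ 0) : c (j + i) = 0 := by
    have := hrel.diag hi₁ (j + i)
    rw [add_sub_cancel_right] at this
    exact (mul_eq_zero.1 this).resolve_left (pow_ne_zero _ hj)
  -- For `k ≠ j + 2i` the relation at `{j + i, k}` collapses to `c j ^ q * c k = 0`.
  have hsupp {j k : G} (hj : c j ≠ 0) (hk : c k ≠ 0) (hkj : k ≠ j + i + i) : j = k := by
    by_contra hjk
    have := hrel.off_diag (A := j + i) (B := k) (fun h => hk (h ▸ hnext hj))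
      (fun h => hjk (add_right_cancel h)) hkj
    rw [add_sub_cancel_right, hnext hj, mul_zero, add_zero] at this
    exact mul_ne_zero (pow_ne_zero _ hj) hk this
  by_cases hkj : k = j + i + i
  · refine (hsupp hk hj fun h => hi (add_left_cancel (a := j) ?_)).symm
    rw [add_zero]
    conv_rhs => rw [h, hkj]
    abel
  · exact hsupp hj hk hkj

theorem exists_eq_single (hrel : GoldCoeffRelation i b fun p => c p.1 ^ q * c p.2)
    (hi : 4 • i ≠ 0) (hc : c ≠ 0) :
    ∃ k a, a ≠ 0 ∧ c = Pi.single k a ∧ b = Pi.single k (a ^ q * a) := by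
  have hi₁ : i ≠ 0 := fun h => hi (by simp [h])
  have hi₂ : i + i ≠ 0 := fun h =>
    hi (by rw [show 4 • i = i + i + (i + i) by abel, h, add_zero])
  obtain ⟨k, hk⟩ : ∃ k, c k ≠ 0 := by
    by_contra! h
    exact hc (funext h)
  have hq : q ≠ 0 := by
    rintro rfl
    exact hk (by simpa using hrel.diag hi₁ k)
  have hc_eq : c = Pi.single k (c k) := by
    funext j
    by_cases hjk : j = k
    · rw [hjk, Pi.single_eq_same]
    rw [Pi.single_eq_of_ne hjk]
    by_contra hj
    exact hjk (hrel.eq_of_ne_zero hi hj hk)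
  refine ⟨k, c k, hk, hc_eq, funext fun m => ?_⟩
  rw [hrel.apply_eq hi₂ m, hc_eq]
  dsimp only
  by_cases hmk : m = k
  · subst hmk
    simp [hi₁]
  · rw [Pi.single_eq_of_ne hmk, Pi.single_eq_of_ne hmk, zero_pow hq, zero_mul, zero_add]
    by_cases hm : m - i = k
    · have : m + i ≠ k := fun h => hi₂ (by simpa [h, hm] using (add_sub_sub_cancel m i i).symm)
      rw [Pi.single_eq_of_ne this, mul_zero]
    · rw [Pi.single_eq_of_ne hm, zero_pow hq, zero_mul]

end GoldCoeffRelation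

end CoeffRelation

section Gold

open ZMod FiniteField

variable {K : Type*} [Field K] [Fintype K] [CharP K 2] {n : ℕ} [NeZero n]

theorem goldCoeffRelation_of_forall_eq (hcard : Fintype.card K = 2 ^ n) (i : ℕ)
    {b c : ZMod n → K}
    (h : ∀ x : K, ∑ m, b m * (x ^ (2 ^ i + 1)) ^ 2 ^ m.val =
      (∑ j, c j * x ^ 2 ^ j.val) ^ (2 ^ i + 1)) :
    GoldCoeffRelation (i : ZMod n) b fun p => c p.1 ^ 2 ^ i * c p.2 := by
  intro z
  have hexp_lt (z : Sym2 (ZMod n)) : pairExp z < Fintype.card K := hcard ▸ pairExp_lt z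
  have hexpand (x : K) : ∑ m, b m * x ^ pairExp s(m + (i : ZMod n), m) =
      ∑ p : ZMod n × ZMod n, c p.1 ^ 2 ^ i * c p.2 * x ^ pairExp s(p.1 + (i : ZMod n), p.2) := by
    calc ∑ m, b m * x ^ pairExp s(m + (i : ZMod n), m)
        = ∑ m, b m * (x ^ (2 ^ i + 1)) ^ 2 ^ m.val := by
          refine sum_congr rfl fun m _ => ?_
          rw [← pow_mul_pow_eq_pow_pairExp hcard, ← pow_pow_val_pow_pow hcard, pow_succ,
            mul_pow, ← pow_mul, ← pow_mul, mul_comm (2 ^ i)]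
      _ = (∑ j, c j * x ^ 2 ^ j.val) ^ (2 ^ i + 1) := h x
      _ = _ := by
          rw [pow_succ, sum_pow_char_pow, sum_mul_sum, ← Fintype.sum_prod_type']
          refine sum_congr rfl fun p _ => ?_
          rw [← pow_mul_pow_eq_pow_pairExp hcard, ← pow_pow_val_pow_pow hcard]
          ring
  simpa only [pairExp_injective.eq_iff] using
    sum_fiber_eq_of_forall_sum_mul_pow_eq (fun _ => hexp_lt _) (fun _ => hexp_lt _) hexpand
      (pairExp z)

theorem exists_eq_of_comp_gold (hcard : Fintype.card K = 2 ^ n) {i : ℕ}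
    (hi : 4 * (i : ZMod n) ≠ 0) {L₁ L₂ : K →+ K} (hL₂ : L₂ ≠ 0)
    (h : ∀ x, L₁ (x ^ (2 ^ i + 1)) = L₂ x ^ (2 ^ i + 1)) :
    ∃ a ≠ 0, ∃ k : ZMod n,
      (∀ x, L₁ x = a ^ (2 ^ i + 1) * x ^ 2 ^ k.val) ∧ ∀ x, L₂ x = a * x ^ 2 ^ k.val := by
  have : Fact (Nat.Prime 2) := ⟨Nat.prime_two⟩
  obtain ⟨b, hb⟩ := L₁.exists_eq_sum_mul_pow_pow hcard
  obtain ⟨c, hc⟩ := L₂.exists_eq_sum_mul_pow_pow hcard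
  have hrel := goldCoeffRelation_of_forall_eq hcard i (b := b) (c := c) fun x => by
    rw [← hb, ← hc, h]
  obtain ⟨k, a, ha, rfl, rfl⟩ := hrel.exists_eq_single (by rwa [nsmul_eq_mul, Nat.cast_ofNat])
    (by rintro rfl; exact hL₂ (AddMonoidHom.ext fun x => by simp [hc]))
  refine ⟨a, ha, k, fun x => ?_, fun x => ?_⟩ <;> simp [hb, hc, Pi.single_apply, pow_succ]

end Gold

theorem stmt16_general (n i : ℕ) (hn : 5 ≤ n)
    (hgcd : Nat.gcd i n = 1)
    (K : Type*) [Field K] [Fintype K] [CharP K 2]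
    (hcard : Fintype.card K = 2 ^ n)
    (L₁ L₂ : K ≃+ K) :
    (∀ x : K, L₁ (x ^ (2 ^ i + 1)) = (L₂ x) ^ (2 ^ i + 1)) ↔
    ∃ a : K, a ≠ 0 ∧ ∃ k < n,
      (∀ x : K, L₁ x = a ^ (2 ^ i + 1) * x ^ 2 ^ k) ∧
      (∀ x : K, L₂ x = a * x ^ 2 ^ k) := by
  have : NeZero n := ⟨by omega⟩
  have hi : 4 * (i : ZMod n) ≠ 0 := by
    rw [← Nat.cast_ofNat, ← Nat.cast_mul, Ne, ZMod.natCast_eq_zero_iff]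
    intro hdvd
    have := Nat.le_of_dvd (by norm_num) ((Nat.coprime_comm.1 hgcd).dvd_of_dvd_mul_right hdvd)
    omega
  have hL₂ : L₂.toAddMonoidHom ≠ 0 := fun h0 =>
    one_ne_zero (L₂.injective (by simpa using DFunLike.congr_fun h0 1))
  constructor
  · intro h
    obtain ⟨a, ha, k, h₁, h₂⟩ :=
      exists_eq_of_comp_gold hcard hi (L₁ := L₁.toAddMonoidHom) hL₂ h
    exact ⟨a, ha, k.val, k.val_lt, h₁, h₂⟩
  · rintro ⟨a, -, k, -, h₁, h₂⟩ x
    rw [h₁, h₂, mul_pow, pow_right_comm]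

/-- Kaspers–Zhou: for the Gold function `G(x) = x^{2^i+1}` on
`F_{2^n}` with `gcd(i,n) = 1`, `n ≥ 5`, two invertible `F_2`-linear (= additive)
maps `L₁, L₂` satisfy `L₁ ∘ G = G ∘ L₂` iff `L₁(x) = a^{2^i+1} x^{2^k}` and
`L₂(x) = a x^{2^k}` for some `a ∈ F_{2^n}^×` and `k < n`; so the linear
automorphism group of `G` is (isomorphic to) `ΓL(1, 2^n)`. -/
theorem stmt16 (n i : ℕ) (hn : 5 ≤ n) (hi1 : 1 ≤ i) (hin : i < n)
    (hgcd : Nat.gcd i n = 1)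
    (K : Type*) [Field K] [Fintype K] [CharP K 2]
    (hcard : Fintype.card K = 2 ^ n)
    (L₁ L₂ : K ≃+ K) :
    (∀ x : K, L₁ (x ^ (2 ^ i + 1)) = (L₂ x) ^ (2 ^ i + 1)) ↔
    ∃ a : K, a ≠ 0 ∧ ∃ k < n,
      (∀ x : K, L₁ x = a ^ (2 ^ i + 1) * x ^ 2 ^ k) ∧
      (∀ x : K, L₂ x = a * x ^ 2 ^ k) :=
  stmt16_general n i hn hgcd K hcard L₁ L₂
end
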